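/- arXiv:2108.01215 — 8 statements merged into one kernel-verified Lean document; each statement's English description precedes it below -/
import Mathlib

section
/- Let S be a nonempty finite set, let P be an S×S matrix with nonnegative entries whose rows each sum to 1 (a transition matrix), let γ ∈ (0,1), and let c : S → ℝ satisfy c_s > 0 for every s. If x : S → ℝ satisfies (I − γP)ᵀx = c (equivalently, for every s, x_s − γ Σ_t P_{ts} x_t = c_s), then for every s ∈ S one has 0 < x_s ≤ (Σ_{t∈S} c_t)/(1 − γ). -/
private noncomputable def Qpow {S : Type*} [Fintype S] (P : S → S → ℝ) : ℕ → S → S → ℝ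
  | 0 => P
  | n+1 => fun u s => ∑ t, Qpow P n u t * P t s

private lemma Qpow_nonneg {S : Type*} [Fintype S] (P : S → S → ℝ)
    (hP0 : ∀ s t, 0 ≤ P s t) : ∀ n u s, 0 ≤ Qpow P n u s := by
  intro n
  induction n with
  | zero => exact hP0
  | succ n ih =>
    intro u s
    exact Finset.sum_nonneg fun t _ => mul_nonneg (ih u t) (hP0 t s)

private lemma Qpow_rowsum {S : Type*} [Fintype S] (P : S → S → ℝ)
    (hP1 : ∀ s, ∑ t, P s t = 1) : ∀ n u, ∑ s, Qpow P n u s = 1 := by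
  intro n
  induction n with
  | zero => exact hP1
  | succ n ih =>
    intro u
    simp only [Qpow]
    rw [Finset.sum_comm]
    calc ∑ t, ∑ s, Qpow P n u t * P t s = ∑ t, Qpow P n u t * ∑ s, P t s := by
          simp [Finset.mul_sum]
      _ = 1 := by simp [hP1, ih]

private lemma Qpow_le_one {S : Type*} [Fintype S] (P : S → S → ℝ)
    (hP0 : ∀ s t, 0 ≤ P s t) (hP1 : ∀ s, ∑ t, P s t = 1) (n : ℕ) (u s : S) :
    Qpow P n u s ≤ 1 := by
  have := Qpow_rowsum P hP1 n u
  calc Qpow P n u s ≤ ∑ t, Qpow P n u t :=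
        Finset.single_le_sum (fun t _ => Qpow_nonneg P hP0 n u t) (Finset.mem_univ s)
    _ = 1 := this

/-- For a transition matrix `P`, discount `γ ∈ (0,1)` and a positive vector `c`,
any solution `x` of `(I - γP)ᵀx = c` satisfies `0 < x_s ≤ (Σ_t c_t)/(1-γ)` for all `s`. -/
theorem stmt1 {S : Type*} [Fintype S] [Nonempty S]
    (P : S → S → ℝ) (hP0 : ∀ s t, 0 ≤ P s t) (hP1 : ∀ s, ∑ t, P s t = 1)
    (γ : ℝ) (hγ0 : 0 < γ) (hγ1 : γ < 1)
    (c : S → ℝ) (hc : ∀ s, 0 < c s)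
    (x : S → ℝ) (hx : ∀ s, x s - γ * ∑ t, P t s * x t = c s) :
    ∀ s, 0 < x s ∧ x s ≤ (∑ t, c t) / (1 - γ) := by
  have hx' : ∀ s, x s = c s + γ * ∑ t, P t s * x t := fun s => by linarith [hx s]
  -- m : lower bound on x, ≤ 0
  set m : ℝ := min (Finset.univ.inf' Finset.univ_nonempty x) 0 with hm
  have hm0 : m ≤ 0 := min_le_right _ _
  have hmx : ∀ t, m ≤ x t := fun t =>
    le_trans (min_le_left _ _) (Finset.inf'_le _ (Finset.mem_univ t))
  set K : ℝ := (Fintype.card S : ℝ) * m with hK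
  have hK0 : K ≤ 0 := mul_nonpos_of_nonneg_of_nonpos (Nat.cast_nonneg _) hm0
  -- key iteration
  have main : ∀ n s, c s + γ ^ (n + 1) * ∑ t, Qpow P n t s * x t ≤ x s := by
    intro n
    induction n with
    | zero =>
      intro s
      rw [hx' s]
      simp [Qpow]
    | succ n ih =>
      intro s
      rw [hx' s]
      have h1 : ∀ t, γ ^ (n + 1) * ∑ u, Qpow P n u t * x u ≤ x t := fun t => by
        have := ih t
        have := hc t
        linarith
      have h2 : γ ^ (n + 1) * ∑ u, Qpow P (n + 1) u s * x u
          = ∑ t, P t s * (γ ^ (n + 1) * ∑ u, Qpow P n u t * x u) := by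
        simp only [Qpow, Finset.sum_mul, Finset.mul_sum]
        rw [Finset.sum_comm]
        apply Finset.sum_congr rfl
        intro t _
        apply Finset.sum_congr rfl
        intro u _
        ring
      have h3 : γ ^ (n + 1) * ∑ u, Qpow P (n + 1) u s * x u ≤ ∑ t, P t s * x t := by
        rw [h2]
        exact Finset.sum_le_sum fun t _ =>
          mul_le_mul_of_nonneg_left (h1 t) (hP0 t s)
      have : γ * (γ ^ (n + 1) * ∑ u, Qpow P (n + 1) u s * x u) ≤ γ * ∑ t, P t s * x t :=
        mul_le_mul_of_nonneg_left h3 hγ0.le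
      calc c s + γ ^ (n + 1 + 1) * ∑ u, Qpow P (n + 1) u s * x u
          = c s + γ * (γ ^ (n + 1) * ∑ u, Qpow P (n + 1) u s * x u) := by ring
        _ ≤ c s + γ * ∑ t, P t s * x t := by linarith
  -- lower bound x s ≥ c s + γ^(n+1) * K, then take limit
  have hlow : ∀ s, c s ≤ x s := by
    intro s
    have hseq : ∀ n : ℕ, c s + γ ^ (n + 1) * K ≤ x s := by
      intro n
      have hb : K ≤ ∑ t, Qpow P n t s * x t := by
        calc K = (Fintype.card S : ℝ) * m := rfl
          _ ≤ (∑ t, Qpow P n t s) * m := by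
              apply mul_le_mul_of_nonpos_right _ hm0
              calc ∑ t, Qpow P n t s ≤ ∑ _t : S, (1 : ℝ) :=
                    Finset.sum_le_sum fun t _ => Qpow_le_one P hP0 hP1 n t s
                _ = (Fintype.card S : ℝ) := by simp
          _ = ∑ t, Qpow P n t s * m := by rw [Finset.sum_mul]
          _ ≤ ∑ t, Qpow P n t s * x t :=
              Finset.sum_le_sum fun t _ =>
                mul_le_mul_of_nonneg_left (hmx t) (Qpow_nonneg P hP0 n t s)
      have := main n s
      nlinarith [pow_pos hγ0 (n + 1)]
    have htend : Filter.Tendsto (fun n : ℕ => c s + γ ^ (n + 1) * K)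
        Filter.atTop (nhds (c s + 0 * K)) := by
      apply Filter.Tendsto.const_add
      apply Filter.Tendsto.mul_const
      have h0 : Filter.Tendsto (fun n : ℕ => γ ^ n) Filter.atTop (nhds 0) :=
        tendsto_pow_atTop_nhds_zero_of_lt_one hγ0.le hγ1
      exact h0.comp (Filter.tendsto_add_atTop_nat 1)
    have : c s + 0 * K ≤ x s :=
      le_of_tendsto htend (Filter.Eventually.of_forall hseq)
    linarith
  have hpos : ∀ s, 0 < x s := fun s => lt_of_lt_of_le (hc s) (hlow s)
  -- sum identity
  have h1 : ∑ s, ∑ t, P t s * x t = ∑ t, x t := by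
    rw [Finset.sum_comm]
    have : ∀ t, ∑ s, P t s * x t = x t := by
      intro t
      rw [← Finset.sum_mul, hP1 t, one_mul]
    simp [this]
  have hsum : ∑ t, c t = (1 - γ) * ∑ t, x t := by
    calc ∑ t, c t = ∑ s, (x s - γ * ∑ t, P t s * x t) :=
          (Finset.sum_congr rfl fun s _ => hx s).symm
      _ = ∑ s, x s - γ * ∑ s, ∑ t, P t s * x t := by
          rw [Finset.sum_sub_distrib, Finset.mul_sum]
      _ = (1 - γ) * ∑ t, x t := by rw [h1]; ring
  have hγne : (0:ℝ) < 1 - γ := by linarith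
  have hsx : (∑ t, c t) / (1 - γ) = ∑ t, x t := by
    rw [hsum]
    field_simp
  intro s
  refine ⟨hpos s, ?_⟩
  rw [hsx]
  exact Finset.single_le_sum (fun t _ => (hpos t).le) (Finset.mem_univ s)
end

section
/- Let ρ : S → ℝ be a probability vector with ρ_s > 0 for all s, let β > 0, λ ≥ 0, let π be a policy and V : S → ℝ. Define the Bellman residual ℓ = (I − γP^π)V − r^π + λH(π). If the critic gradient vanishes, i.e. for every s, −ρ_s + β((I − γP^π)ᵀ(ℓ ⊙ ρ))_s = 0 where (ℓ ⊙ ρ)_t = ℓ_t ρ_t, then ℓ_s > 0 for every s ∈ S. -/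
/-- If the critic gradient vanishes, then the Bellman residual
`ℓ = (I - γP^π)V - r^π + λH(π)` is strictly positive at every state. -/
theorem stmt3 {S A : Type*} [Fintype S] [Nonempty S] [Fintype A] [Nonempty A]
    (P : A → S → S → ℝ) (hP0 : ∀ a s t, 0 ≤ P a s t) (hP1 : ∀ a s, ∑ t, P a s t = 1)
    (r : S → A → ℝ) (γ : ℝ) (hγ0 : 0 < γ) (hγ1 : γ < 1)
    (π : S → A → ℝ) (hπ0 : ∀ s a, 0 ≤ π s a) (hπ1 : ∀ s, ∑ a, π s a = 1)
    (ρ : S → ℝ) (hρpos : ∀ s, 0 < ρ s) (hρ1 : ∑ s, ρ s = 1)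
    (β lam : ℝ) (hβ : 0 < β) (hlam : 0 ≤ lam)
    (V ℓ : S → ℝ)
    (hℓ : ∀ s, ℓ s = V s - γ * ∑ t, (∑ a, π s a * P a s t) * V t
        - (∑ a, π s a * r s a) + lam * ∑ a, π s a * Real.log (π s a))
    (hG : ∀ s, -ρ s + β * (ℓ s * ρ s - γ * ∑ t, (∑ a, π t a * P a t s) * (ℓ t * ρ t)) = 0) :
    ∀ s, 0 < ℓ s := by
  set x : S → ℝ := fun s => ℓ s * ρ s with hx
  -- the fixed point equation
  have key : ∀ s, x s = ρ s / β + γ * ∑ t, (∑ a, π t a * P a t s) * x t := by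
    intro s
    have hβ' : β ≠ 0 := ne_of_gt hβ
    have h' : (ℓ s * ρ s - γ * ∑ t, (∑ a, π t a * P a t s) * (ℓ t * ρ t)) * β = ρ s := by
      linear_combination hG s
    have h2 : ℓ s * ρ s - γ * ∑ t, (∑ a, π t a * P a t s) * (ℓ t * ρ t) = ρ s / β := by
      rw [eq_div_iff hβ']; exact h'
    simp only [hx]
    linarith [h2]
  -- nonnegativity of the column entries
  have hPπ0 : ∀ t s, 0 ≤ ∑ a, π t a * P a t s := fun t s =>
    Finset.sum_nonneg fun a _ => mul_nonneg (hπ0 t a) (hP0 a t s)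
  -- Step 1: x ≥ 0 everywhere
  have hxnn : ∀ s, 0 ≤ x s := by
    by_contra hcon
    push_neg at hcon
    obtain ⟨s₀, hs₀⟩ := hcon
    set N : Finset S := Finset.univ.filter (fun s => x s < 0) with hN
    have hs₀N : s₀ ∈ N := by simp [hN, hs₀]
    have hNne : N.Nonempty := ⟨s₀, hs₀N⟩
    set M : ℝ := ∑ s ∈ N, x s with hM
    have hMneg : M < 0 := by
      apply Finset.sum_neg (fun s hs => by simpa [hN] using hs) hNne
    -- sum the fixed point equation over N
    have hsum : M = (∑ s ∈ N, ρ s) / β + γ * ∑ t, (∑ s ∈ N, ∑ a, π t a * P a t s) * x t := by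
      calc M = ∑ s ∈ N, (ρ s / β + γ * ∑ t, (∑ a, π t a * P a t s) * x t) := by
              exact Finset.sum_congr rfl fun s _ => key s
        _ = (∑ s ∈ N, ρ s) / β + γ * ∑ s ∈ N, ∑ t, (∑ a, π t a * P a t s) * x t := by
              rw [Finset.sum_add_distrib, Finset.sum_div, ← Finset.mul_sum]
        _ = (∑ s ∈ N, ρ s) / β + γ * ∑ t, (∑ s ∈ N, ∑ a, π t a * P a t s) * x t := by
              rw [Finset.sum_comm]
              simp_rw [Finset.sum_mul]
    set q : S → ℝ := fun t => ∑ s ∈ N, ∑ a, π t a * P a t s with hq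
    have hq0 : ∀ t, 0 ≤ q t := fun t => Finset.sum_nonneg fun s _ => hPπ0 t s
    have hq1 : ∀ t, q t ≤ 1 := by
      intro t
      have : q t ≤ ∑ s, ∑ a, π t a * P a t s :=
        Finset.sum_le_sum_of_subset_of_nonneg (Finset.subset_univ N)
          (fun s _ _ => hPπ0 t s)
      calc q t ≤ ∑ s, ∑ a, π t a * P a t s := this
        _ = ∑ a, π t a * ∑ s, P a t s := by
              rw [Finset.sum_comm]; simp_rw [Finset.mul_sum]
        _ = 1 := by simp_rw [hP1]; simpa using hπ1 t
    have hbound : M ≤ ∑ t, q t * x t := by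
      have h1 : ∀ t ∈ N, x t ≤ q t * x t := by
        intro t ht
        have hxt : x t < 0 := by simpa [hN] using ht
        nlinarith [hq1 t, hq0 t]
      calc M ≤ ∑ t ∈ N, q t * x t := Finset.sum_le_sum h1
        _ ≤ ∑ t, q t * x t := by
            apply Finset.sum_le_sum_of_subset_of_nonneg (Finset.subset_univ N)
            intro t _ htN
            have hxt : 0 ≤ x t := by
              by_contra h; push_neg at h; exact htN (by simp [hN, h])
            exact mul_nonneg (hq0 t) hxt
    have hρN : 0 < ∑ s ∈ N, ρ s :=
      Finset.sum_pos (fun s _ => hρpos s) hNne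
    have hge : (∑ s ∈ N, ρ s) / β + γ * M ≤ M := by
      conv_rhs => rw [hsum]
      have : γ * M ≤ γ * ∑ t, q t * x t :=
        mul_le_mul_of_nonneg_left hbound (le_of_lt hγ0)
      linarith
    have hpos : 0 < (∑ s ∈ N, ρ s) / β := div_pos hρN hβ
    nlinarith [mul_pos (sub_pos.mpr hγ1) (neg_pos.mpr hMneg)]
  -- Step 2: x > 0 everywhere, hence ℓ > 0
  intro s
  have hxpos : 0 < x s := by
    rw [key s]
    have hsum0 : 0 ≤ ∑ t, (∑ a, π t a * P a t s) * x t :=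
      Finset.sum_nonneg fun t _ => mul_nonneg (hPπ0 t s) (hxnn t)
    have : 0 < ρ s / β := div_pos (hρpos s) hβ
    nlinarith
  have hmul : 0 < ℓ s * ρ s := by simpa [hx] using hxpos
  rcases mul_pos_iff.mp hmul with ⟨h1, _⟩ | ⟨_, h2⟩
  · exact h1
  · linarith [hρpos s]
end

section
/- Let ρ : S → ℝ be a probability vector with ρ_s > 0 for all s, let β > 0, λ ≥ 0, let π be a policy and V : S → ℝ, and set ℓ = (I − γP^π)V − r^π + λH(π). Assume the critic gradient vanishes: for every s, −ρ_s + β((I − γP^π)ᵀ(ℓ ⊙ ρ))_s = 0, where (ℓ ⊙ ρ)_t = ℓ_t ρ_t. Let V^π_λ : S → ℝ be a solution of the Bellman equation (I − γP^π)V^π_λ = r^π − λH(π). Then for every s ∈ S, 0 < V_s − (V^π_λ)_s ≤ 1/(β(1 − γ)² · min_{t∈S} ρ_t). -/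
/-- If the critic gradient vanishes and `V^π_λ` solves the regularized Bellman
equation `(I - γP^π)V^π_λ = r^π - λH(π)`, then
`0 < V_s - (V^π_λ)_s ≤ 1/(β(1-γ)² · min_t ρ_t)` for every `s`. -/
theorem stmt4 {S A : Type*} [Fintype S] [Nonempty S] [Fintype A] [Nonempty A]
    (P : A → S → S → ℝ) (hP0 : ∀ a s t, 0 ≤ P a s t) (hP1 : ∀ a s, ∑ t, P a s t = 1)
    (r : S → A → ℝ) (γ : ℝ) (hγ0 : 0 < γ) (hγ1 : γ < 1)
    (π : S → A → ℝ) (hπ0 : ∀ s a, 0 ≤ π s a) (hπ1 : ∀ s, ∑ a, π s a = 1)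
    (ρ : S → ℝ) (hρpos : ∀ s, 0 < ρ s) (hρ1 : ∑ s, ρ s = 1)
    (β lam : ℝ) (hβ : 0 < β) (hlam : 0 ≤ lam)
    (V ℓ : S → ℝ)
    (hℓ : ∀ s, ℓ s = V s - γ * ∑ t, (∑ a, π s a * P a s t) * V t
        - (∑ a, π s a * r s a) + lam * ∑ a, π s a * Real.log (π s a))
    (hG : ∀ s, -ρ s + β * (ℓ s * ρ s - γ * ∑ t, (∑ a, π t a * P a t s) * (ℓ t * ρ t)) = 0)
    (Vpl : S → ℝ)
    (hVpl : ∀ s, Vpl s - γ * ∑ t, (∑ a, π s a * P a s t) * Vpl t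
        = (∑ a, π s a * r s a) - lam * ∑ a, π s a * Real.log (π s a)) :
    ∀ s, 0 < V s - Vpl s ∧
      V s - Vpl s ≤ 1 / (β * (1 - γ) ^ 2 * Finset.univ.inf' Finset.univ_nonempty ρ) := by
  set Q : S → S → ℝ := fun s t => ∑ a, π s a * P a s t with hQdef
  have hQ0 : ∀ s t, 0 ≤ Q s t := fun s t =>
    Finset.sum_nonneg fun a _ => mul_nonneg (hπ0 s a) (hP0 a s t)
  have hQ1 : ∀ s, ∑ t, Q s t = 1 := by
    intro s
    calc ∑ t, ∑ a, π s a * P a s t = ∑ a, ∑ t, π s a * P a s t := Finset.sum_comm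
    _ = ∑ a, π s a * ∑ t, P a s t := by simp [Finset.mul_sum]
    _ = 1 := by simp [hP1, hπ1]
  set w : S → ℝ := fun s => ℓ s * ρ s with hwdef
  have hw : ∀ s, w s = ρ s / β + γ * ∑ t, Q t s * w t := by
    intro s
    have h := hG s
    have hb : β * (w s - γ * ∑ t, Q t s * w t) = ρ s := by
      simp only [hwdef, hQdef] at *
      linarith
    field_simp
    linarith
  -- negative part argument for w
  have hwnn : ∀ s, 0 ≤ w s := by
    set n : S → ℝ := fun s => max (-(w s)) 0 with hndef
    have hn0 : ∀ s, 0 ≤ n s := fun s => le_max_right _ _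
    have hn : ∀ s, n s ≤ γ * ∑ t, Q t s * n t := by
      intro s
      have hsum0 : 0 ≤ γ * ∑ t, Q t s * n t :=
        mul_nonneg hγ0.le (Finset.sum_nonneg fun t _ => mul_nonneg (hQ0 t s) (hn0 t))
      apply max_le _ hsum0
      have h1 : -(w s) = -(ρ s / β) + γ * ∑ t, Q t s * (-(w t)) := by
        rw [hw s, show (∑ t, Q t s * (-(w t))) = -∑ t, Q t s * w t by simp]
        ring
      rw [h1]
      have h2 : ∑ t, Q t s * (-(w t)) ≤ ∑ t, Q t s * n t :=
        Finset.sum_le_sum fun t _ =>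
          mul_le_mul_of_nonneg_left (le_max_left _ _) (hQ0 t s)
      have h3 : 0 ≤ ρ s / β := div_nonneg (hρpos s).le hβ.le
      nlinarith
    have hsum : (1 - γ) * ∑ s, n s ≤ 0 := by
      have h1 : ∑ s, n s ≤ ∑ s, γ * ∑ t, Q t s * n t := Finset.sum_le_sum fun s _ => hn s
      have h2 : ∑ s, γ * ∑ t, Q t s * n t = γ * ∑ t, n t := by
        rw [← Finset.mul_sum, Finset.sum_comm]
        congr 1
        refine Finset.sum_congr rfl fun t _ => ?_
        rw [← Finset.sum_mul, hQ1 t, one_mul]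
      nlinarith
    have hns : ∑ s, n s = 0 := by
      have h3 : 0 ≤ ∑ s, n s := Finset.sum_nonneg fun s _ => hn0 s
      nlinarith
    intro s
    have hz := (Finset.sum_eq_zero_iff_of_nonneg (fun s _ => hn0 s)).mp hns s (Finset.mem_univ s)
    by_contra hc
    push_neg at hc
    simp only [hndef] at hz
    rw [max_eq_left (by linarith)] at hz
    linarith
  -- w ≥ ρ/β
  have hwlb : ∀ s, ρ s / β ≤ w s := by
    intro s
    rw [hw s]
    have : 0 ≤ γ * ∑ t, Q t s * w t :=
      mul_nonneg hγ0.le (Finset.sum_nonneg fun t _ => mul_nonneg (hQ0 t s) (hwnn t))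
    linarith
  -- total mass of w
  have hwsum : (1 - γ) * ∑ s, w s = 1 / β := by
    have h1 : ∑ s, w s = ∑ s, (ρ s / β + γ * ∑ t, Q t s * w t) :=
      Finset.sum_congr rfl fun s _ => hw s
    have h2 : ∑ s, γ * ∑ t, Q t s * w t = γ * ∑ t, w t := by
      rw [← Finset.mul_sum, Finset.sum_comm]
      congr 1
      refine Finset.sum_congr rfl fun t _ => ?_
      rw [← Finset.sum_mul, hQ1 t, one_mul]
    have h3 : ∑ s, ρ s / β = 1 / β := by
      rw [← Finset.sum_div, hρ1]
    rw [Finset.sum_add_distrib, h2, h3] at h1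
    linarith
  set m : ℝ := Finset.univ.inf' Finset.univ_nonempty ρ with hmdef
  have hm0 : 0 < m := by
    rw [hmdef, Finset.lt_inf'_iff]
    exact fun s _ => hρpos s
  have hmle : ∀ s, m ≤ ρ s := fun s => Finset.inf'_le _ (Finset.mem_univ s)
  have hℓpos : ∀ s, 0 < ℓ s := by
    intro s
    have h1 : 0 < w s := lt_of_lt_of_le (div_pos (hρpos s) hβ) (hwlb s)
    have h2 : 0 < ρ s := hρpos s
    have h3 : w s = ℓ s * ρ s := rfl
    by_contra hc
    push_neg at hc
    nlinarith
  -- bound on ℓ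
  have hℓub : ∀ s, (1 - γ) * (ℓ s * m) ≤ 1 / β := by
    intro s
    have h1 : w s ≤ ∑ t, w t :=
      Finset.single_le_sum (fun t _ => hwnn t) (Finset.mem_univ s)
    have h2 : ℓ s * m ≤ ℓ s * ρ s :=
      mul_le_mul_of_nonneg_left (hmle s) (hℓpos s).le
    have h3 : ℓ s * ρ s = w s := rfl
    nlinarith
  -- D = V - Vpl
  set D : S → ℝ := fun s => V s - Vpl s with hDdef
  have hD : ∀ s, D s = ℓ s + γ * ∑ t, Q s t * D t := by
    intro s
    have h1 := hℓ s
    have h2 := hVpl s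
    have h3 : ∑ t, Q s t * D t = (∑ t, Q s t * V t) - ∑ t, Q s t * Vpl t := by
      rw [← Finset.sum_sub_distrib]
      exact Finset.sum_congr rfl fun t _ => by simp [hDdef]; ring
    simp only [hDdef, hQdef] at *
    rw [h3]
    linarith
  -- D ≥ 0 via max of negative part
  have hDnn : ∀ s, 0 ≤ D s := by
    set n : S → ℝ := fun s => max (-(D s)) 0 with hndef
    have hn0 : ∀ s, 0 ≤ n s := fun s => le_max_right _ _
    have hn : ∀ s, n s ≤ γ * ∑ t, Q s t * n t := by
      intro s
      have hsum0 : 0 ≤ γ * ∑ t, Q s t * n t :=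
        mul_nonneg hγ0.le (Finset.sum_nonneg fun t _ => mul_nonneg (hQ0 s t) (hn0 t))
      apply max_le _ hsum0
      have h1 : -(D s) = -(ℓ s) + γ * ∑ t, Q s t * (-(D t)) := by
        rw [hD s, show (∑ t, Q s t * (-(D t))) = -∑ t, Q s t * D t by simp]
        ring
      rw [h1]
      have h2 : ∑ t, Q s t * (-(D t)) ≤ ∑ t, Q s t * n t :=
        Finset.sum_le_sum fun t _ =>
          mul_le_mul_of_nonneg_left (le_max_left _ _) (hQ0 s t)
      have h3 : -(ℓ s) ≤ 0 := by linarith [hℓpos s]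
      nlinarith
    obtain ⟨s0, -, hs0⟩ := Finset.exists_max_image Finset.univ n Finset.univ_nonempty
    have hmax : n s0 ≤ γ * n s0 := by
      calc n s0 ≤ γ * ∑ t, Q s0 t * n t := hn s0
      _ ≤ γ * ∑ t, Q s0 t * n s0 := by
          apply mul_le_mul_of_nonneg_left _ hγ0.le
          exact Finset.sum_le_sum fun t _ =>
            mul_le_mul_of_nonneg_left (hs0 t (Finset.mem_univ t)) (hQ0 s0 t)
      _ = γ * n s0 := by rw [← Finset.sum_mul, hQ1 s0, one_mul]
    have hn00 : n s0 = 0 := by nlinarith [hn0 s0]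
    intro s
    have := hs0 s (Finset.mem_univ s)
    rw [hn00] at this
    have : -(D s) ≤ 0 := le_trans (le_max_left _ _) this
    linarith
  have hDpos : ∀ s, 0 < D s := by
    intro s
    rw [hD s]
    have : 0 ≤ γ * ∑ t, Q s t * D t :=
      mul_nonneg hγ0.le (Finset.sum_nonneg fun t _ => mul_nonneg (hQ0 s t) (hDnn t))
    linarith [hℓpos s]
  -- upper bound via max of D
  obtain ⟨s1, -, hs1⟩ := Finset.exists_max_image Finset.univ D Finset.univ_nonempty
  have hub : (1 - γ) * D s1 ≤ ℓ s1 := by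
    have h1 : D s1 ≤ ℓ s1 + γ * D s1 := by
      calc D s1 = ℓ s1 + γ * ∑ t, Q s1 t * D t := hD s1
      _ ≤ ℓ s1 + γ * ∑ t, Q s1 t * D s1 := by
          have := Finset.sum_le_sum fun t (_ : t ∈ Finset.univ) =>
            mul_le_mul_of_nonneg_left (hs1 t (Finset.mem_univ t)) (hQ0 s1 t)
          nlinarith
      _ = ℓ s1 + γ * D s1 := by rw [← Finset.sum_mul, hQ1 s1, one_mul]
    linarith
  intro s
  refine ⟨hDpos s, ?_⟩
  have h1 : D s ≤ D s1 := hs1 s (Finset.mem_univ s)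
  have hg : (0:ℝ) < 1 - γ := by linarith
  have e1 : (1 - γ) * D s ≤ ℓ s1 := by nlinarith
  have e2 : ((1 - γ) * D s) * m ≤ ℓ s1 * m := mul_le_mul_of_nonneg_right e1 hm0.le
  have e3 : (1 - γ) * (((1 - γ) * D s) * m) ≤ (1 - γ) * (ℓ s1 * m) :=
    mul_le_mul_of_nonneg_left e2 hg.le
  have h2 : (1 - γ) * ((1 - γ) * (D s * m)) ≤ 1 / β := by
    have h4 := le_trans e3 (hℓub s1)
    linarith [h4, show (1 - γ) * (((1 - γ) * D s) * m) = (1 - γ) * ((1 - γ) * (D s * m)) from by ring]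
  rw [le_div_iff₀ (by positivity)]
  have hb1 : β * (1 / β) = 1 := mul_one_div_cancel hβ.ne'
  nlinarith [mul_le_mul_of_nonneg_left h2 hβ.le, hb1]
end

section
/- Let V : S → ℝ and define q(s,a) = r(s,a) + γ Σ_t P^a_{st} V_t. Suppose that for each s ∈ S there is an action a_s ∈ A such that q(s,a_s) > q(s,a) for every a ≠ a_s. Fix a step size η > 0 and let (π_k)_{k≥0} be the sequence of policies defined by an initial policy π_0 with π_0(s,a) > 0 for all s,a, and the multiplicative update π_{k+1}(s,a) = π_k(s,a)·exp(η q(s,a)) / (Σ_b π_k(s,b)·exp(η q(s,b))). Then for every s and a, lim_{k→∞} π_k(s,a) = 1 if a = a_s and lim_{k→∞} π_k(s,a) = 0 if a ≠ a_s. -/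
/-- The multiplicative (soft-max / exponentiated gradient) policy update with a
fixed value function `V` converges to the deterministic policy selecting the unique maximizer
`a_s` of `q(s,a) = r(s,a) + γ Σ_t P^a_{st} V_t`. -/
theorem stmt5 {S A : Type*} [Fintype S] [Nonempty S] [Fintype A] [Nonempty A] [DecidableEq A]
    (P : A → S → S → ℝ) (hP0 : ∀ a s t, 0 ≤ P a s t) (hP1 : ∀ a s, ∑ t, P a s t = 1)
    (r : S → A → ℝ) (γ : ℝ) (hγ0 : 0 < γ) (hγ1 : γ < 1)
    (V : S → ℝ) (q : S → A → ℝ)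
    (hq : ∀ s a, q s a = r s a + γ * ∑ t, P a s t * V t)
    (as : S → A) (has : ∀ s a, a ≠ as s → q s a < q s (as s))
    (η : ℝ) (hη : 0 < η)
    (π : ℕ → S → A → ℝ)
    (hπ0pos : ∀ s a, 0 < π 0 s a) (hπ0sum : ∀ s, ∑ a, π 0 s a = 1)
    (hupd : ∀ k s a, π (k + 1) s a
        = π k s a * Real.exp (η * q s a) / ∑ b, π k s b * Real.exp (η * q s b)) :
    ∀ s a, Filter.Tendsto (fun k => π k s a) Filter.atTop
      (nhds (if a = as s then (1 : ℝ) else 0)) := by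
  intro s a
  set c : A → ℝ := fun b => π 0 s b with hc
  set e : A → ℝ := fun b => Real.exp (η * q s b) with he
  have hcpos : ∀ b, 0 < c b := fun b => hπ0pos s b
  have hepos : ∀ b, 0 < e b := fun b => Real.exp_pos _
  set m : A := as s with hm
  -- closed form
  have key : ∀ k b, π k s b = c b * e b ^ k / ∑ b', c b' * e b' ^ k := by
    intro k
    induction k with
    | zero => intro b; simp [hπ0sum s, hc]
    | succ k ih =>
      intro b
      have hD : 0 < ∑ b', c b' * e b' ^ k :=
        Finset.sum_pos (fun b' _ => mul_pos (hcpos b') (pow_pos (hepos b') _)) Finset.univ_nonempty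
      have hsum : (∑ b', π k s b' * Real.exp (η * q s b'))
          = (∑ b', c b' * e b' ^ (k + 1)) / ∑ b', c b' * e b' ^ k := by
        rw [Finset.sum_div]
        refine Finset.sum_congr rfl fun b' _ => ?_
        rw [ih b']
        show c b' * e b' ^ k / (∑ b'', c b'' * e b'' ^ k) * e b' = _
        ring
      have hD' : 0 < ∑ b', c b' * e b' ^ (k + 1) :=
        Finset.sum_pos (fun b' _ => mul_pos (hcpos b') (pow_pos (hepos b') _)) Finset.univ_nonempty
      rw [hupd k s b, ih b, hsum]
      show c b * e b ^ k / (∑ b', c b' * e b' ^ k) * e b / _ = _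
      field_simp
      ring
  -- rewrite with ratios
  set ρ : A → ℝ := fun b => e b / e m with hρ
  have hρpos : ∀ b, 0 < ρ b := fun b => div_pos (hepos b) (hepos m)
  have hρm : ρ m = 1 := div_self (ne_of_gt (hepos m))
  have hρlt : ∀ b, b ≠ m → ρ b < 1 := by
    intro b hb
    rw [hρ]
    apply (div_lt_one (hepos m)).2
    exact Real.exp_lt_exp.2 (by
      have := has s b hb
      nlinarith)
  have keyρ : ∀ k b, π k s b = c b * ρ b ^ k / ∑ b', c b' * ρ b' ^ k := by
    intro k b
    rw [key k b]
    have hem : (0:ℝ) < e m ^ k := pow_pos (hepos m) k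
    rw [hρ]
    have hD : 0 < ∑ b', c b' * e b' ^ k :=
      Finset.sum_pos (fun b' _ => mul_pos (hcpos b') (pow_pos (hepos b') _)) Finset.univ_nonempty
    have hsum : (∑ b', c b' * (e b' / e m) ^ k)
        = (∑ b', c b' * e b' ^ k) / e m ^ k := by
      rw [Finset.sum_div]
      refine Finset.sum_congr rfl fun b' _ => ?_
      rw [div_pow]; ring
    rw [hsum]
    field_simp
    rw [div_pow, mul_assoc, div_mul_cancel₀ _ (ne_of_gt hem)]
  -- limits
  have hnum : ∀ b, Filter.Tendsto (fun k => c b * ρ b ^ k) Filter.atTop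
      (nhds (if b = m then c m else 0)) := by
    intro b
    by_cases hb : b = m
    · subst hb; simp [hρm]
    · simp only [hb, if_false]
      have : Filter.Tendsto (fun k => ρ b ^ k) Filter.atTop (nhds 0) :=
        tendsto_pow_atTop_nhds_zero_of_lt_one (le_of_lt (hρpos b)) (hρlt b hb)
      simpa using this.const_mul (c b)
  have hden : Filter.Tendsto (fun k => ∑ b', c b' * ρ b' ^ k) Filter.atTop (nhds (c m)) := by
    have := tendsto_finset_sum (Finset.univ : Finset A) (fun b' _ => hnum b')
    simpa [Finset.sum_ite_eq'] using this
  have hlim : Filter.Tendsto (fun k => c a * ρ a ^ k / ∑ b', c b' * ρ b' ^ k)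
      Filter.atTop (nhds ((if a = m then c m else 0) / c m)) :=
    (hnum a).div hden (ne_of_gt (hcpos m))
  have : Filter.Tendsto (fun k => π k s a) Filter.atTop
      (nhds ((if a = m then c m else 0) / c m)) := by
    simpa only [← keyρ] using hlim
  convert this using 2
  by_cases ha : a = m <;> simp [ha, div_self (ne_of_gt (hcpos m))]
end

section
/- Let V*, V∞ : S → ℝ, β > 0, and let π*, π∞ be policies such that: (i) (I − γP^{π*})V* = r^{π*}; (ii) for every policy π, r^{π*} + γP^{π*}V* ≥ r^π + γP^π V* componentwise (π* is greedy for V*); (iii) for every policy π, r^{π∞} + γP^{π∞}V∞ ≥ r^π + γP^π V∞ componentwise (π∞ is greedy for V∞); (iv) there exists u : S → ℝ with (I − γP^{π∞})ᵀu = 𝟙 and (I − γP^{π∞})V∞ = r^{π∞} + (1/β)u. Then 0 ≤ V∞_s − V*_s ≤ |S|/(β(1 − γ)²) for every s ∈ S. -/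
open Finset Matrix

/-- Monotonicity: `(I - γQ)x ≥ 0 ⇒ x ≥ 0` for a row-stochastic `Q`. -/
lemma stmt8_mono_aux {S : Type*} [Fintype S] [Nonempty S]
    (Q : S → S → ℝ) (hQ0 : ∀ s t, 0 ≤ Q s t) (hQ1 : ∀ s, ∑ t, Q s t = 1)
    (γ : ℝ) (hγ0 : 0 < γ) (hγ1 : γ < 1)
    (x : S → ℝ) (hx : ∀ s, 0 ≤ x s - γ * ∑ t, Q s t * x t) :
    ∀ s, 0 ≤ x s := by
  obtain ⟨s0, -, hs0⟩ := Finset.exists_min_image Finset.univ x ⟨Classical.arbitrary S, mem_univ _⟩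
  have hmin : ∀ t, x s0 ≤ x t := fun t => hs0 t (mem_univ t)
  have h1 : x s0 ≤ ∑ t, Q s0 t * x t := by
    calc x s0 = ∑ t, Q s0 t * x s0 := by rw [← Finset.sum_mul, hQ1]; ring
    _ ≤ ∑ t, Q s0 t * x t :=
      Finset.sum_le_sum fun t _ => mul_le_mul_of_nonneg_left (hmin t) (hQ0 s0 t)
  have h2 := hx s0
  have h4 : 0 ≤ x s0 := by nlinarith [hmin s0]
  exact fun s => le_trans h4 (hmin s)

/-- Contraction bound: `(I - γQ)x ≤ c ⇒ x ≤ c/(1-γ)` for a row-stochastic `Q`. -/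
lemma stmt8_bound_aux {S : Type*} [Fintype S] [Nonempty S]
    (Q : S → S → ℝ) (hQ0 : ∀ s t, 0 ≤ Q s t) (hQ1 : ∀ s, ∑ t, Q s t = 1)
    (γ : ℝ) (hγ0 : 0 < γ) (hγ1 : γ < 1) (c : ℝ)
    (x : S → ℝ) (hx : ∀ s, x s - γ * ∑ t, Q s t * x t ≤ c) :
    ∀ s, x s ≤ c / (1 - γ) := by
  obtain ⟨s0, -, hs0⟩ := Finset.exists_max_image Finset.univ x ⟨Classical.arbitrary S, mem_univ _⟩
  have hmax : ∀ t, x t ≤ x s0 := fun t => hs0 t (mem_univ t)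
  have h1 : ∑ t, Q s0 t * x t ≤ x s0 := by
    calc ∑ t, Q s0 t * x t ≤ ∑ t, Q s0 t * x s0 :=
      Finset.sum_le_sum fun t _ => mul_le_mul_of_nonneg_left (hmax t) (hQ0 s0 t)
    _ = x s0 := by rw [← Finset.sum_mul, hQ1]; ring
  have h2 := hx s0
  have hγ' : (0:ℝ) < 1 - γ := by linarith
  have h4 : x s0 ≤ c / (1 - γ) := by
    rw [le_div_iff₀ hγ']; nlinarith
  exact fun s => le_trans (hmax s) h4

/-- If `π*` is greedy for `V*` with `(I-γP^{π*})V* = r^{π*}`, `π∞` is greedy for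
`V∞`, and `(V∞,π∞)` satisfies the critic fixed-point equation
`(I-γP^{π∞})V∞ = r^{π∞} + (1/β)(I-γP^{π∞})^{-⊤}𝟙`, then
`0 ≤ V∞_s - V*_s ≤ |S|/(β(1-γ)²)` for all `s`. -/
theorem stmt8 {S A : Type*} [Fintype S] [Nonempty S] [Fintype A] [Nonempty A]
    (P : A → S → S → ℝ) (hP0 : ∀ a s t, 0 ≤ P a s t) (hP1 : ∀ a s, ∑ t, P a s t = 1)
    (r : S → A → ℝ) (γ : ℝ) (hγ0 : 0 < γ) (hγ1 : γ < 1)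
    (β : ℝ) (hβ : 0 < β)
    (Vstar Vinf : S → ℝ)
    (πstar πinf : S → A → ℝ)
    (hπstar0 : ∀ s a, 0 ≤ πstar s a) (hπstar1 : ∀ s, ∑ a, πstar s a = 1)
    (hπinf0 : ∀ s a, 0 ≤ πinf s a) (hπinf1 : ∀ s, ∑ a, πinf s a = 1)
    -- (i) Bellman equation for (V*, π*)
    (hbell : ∀ s, Vstar s - γ * ∑ t, (∑ a, πstar s a * P a s t) * Vstar t
        = ∑ a, πstar s a * r s a)
    -- (ii) π* is greedy for V*
    (hgreedyStar : ∀ π : S → A → ℝ, (∀ s a, 0 ≤ π s a) → (∀ s, ∑ a, π s a = 1) →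
      ∀ s, (∑ a, π s a * r s a) + γ * ∑ t, (∑ a, π s a * P a s t) * Vstar t
        ≤ (∑ a, πstar s a * r s a) + γ * ∑ t, (∑ a, πstar s a * P a s t) * Vstar t)
    -- (iii) π∞ is greedy for V∞
    (hgreedyInf : ∀ π : S → A → ℝ, (∀ s a, 0 ≤ π s a) → (∀ s, ∑ a, π s a = 1) →
      ∀ s, (∑ a, π s a * r s a) + γ * ∑ t, (∑ a, π s a * P a s t) * Vinf t
        ≤ (∑ a, πinf s a * r s a) + γ * ∑ t, (∑ a, πinf s a * P a s t) * Vinf t)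
    -- (iv) critic fixed-point equation
    (hfix : ∃ u : S → ℝ,
      (∀ s, u s - γ * ∑ t, (∑ a, πinf t a * P a t s) * u t = 1) ∧
      (∀ s, Vinf s - γ * ∑ t, (∑ a, πinf s a * P a s t) * Vinf t
        = (∑ a, πinf s a * r s a) + (1 / β) * u s)) :
    ∀ s, 0 ≤ Vinf s - Vstar s ∧
      Vinf s - Vstar s ≤ (Fintype.card S : ℝ) / (β * (1 - γ) ^ 2) := by
  classical
  obtain ⟨u, hu1, hu2⟩ := hfix
  set Qi : S → S → ℝ := fun s t => ∑ a, πinf s a * P a s t with hQi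
  set Qs : S → S → ℝ := fun s t => ∑ a, πstar s a * P a s t with hQs
  have hQi0 : ∀ s t, 0 ≤ Qi s t := fun s t =>
    Finset.sum_nonneg fun a _ => mul_nonneg (hπinf0 s a) (hP0 a s t)
  have hQs0 : ∀ s t, 0 ≤ Qs s t := fun s t =>
    Finset.sum_nonneg fun a _ => mul_nonneg (hπstar0 s a) (hP0 a s t)
  have hQi1 : ∀ s, ∑ t, Qi s t = 1 := by
    intro s
    rw [Finset.sum_comm]
    calc ∑ a, ∑ t, πinf s a * P a s t = ∑ a, πinf s a * ∑ t, P a s t := by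
          simp [Finset.mul_sum]
    _ = 1 := by simp [hP1, hπinf1]
  have hQs1 : ∀ s, ∑ t, Qs s t = 1 := by
    intro s
    rw [Finset.sum_comm]
    calc ∑ a, ∑ t, πstar s a * P a s t = ∑ a, πstar s a * ∑ t, P a s t := by
          simp [Finset.mul_sum]
    _ = 1 := by simp [hP1, hπstar1]
  have hγ' : (0:ℝ) < 1 - γ := by linarith
  -- Step A: u ≥ 0, via invertibility of B = I - γQi and nonnegativity of B⁻¹.
  set B : Matrix S S ℝ := Matrix.of fun s t => (if s = t then (1:ℝ) else 0) - γ * Qi s t with hB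
  have hBmul : ∀ x : S → ℝ, ∀ s, B.mulVec x s = x s - γ * ∑ t, Qi s t * x t := by
    intro x s
    simp only [Matrix.mulVec, dotProduct, hB, Matrix.of_apply, sub_mul, ite_mul, one_mul, zero_mul]
    rw [Finset.sum_sub_distrib, Finset.sum_ite_eq, if_pos (mem_univ s), Finset.mul_sum]
    ring_nf
  have hBinj : Function.Injective B.mulVec := by
    intro x y hxy
    have key : ∀ z : S → ℝ, B.mulVec z = 0 → z = 0 := by
      intro z hz
      have h1 : ∀ s, 0 ≤ z s := by
        apply stmt8_mono_aux Qi hQi0 hQi1 γ hγ0 hγ1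
        intro s; rw [← hBmul z s, hz]; simp
      have h2 : ∀ s, 0 ≤ -z s := by
        apply stmt8_mono_aux Qi hQi0 hQi1 γ hγ0 hγ1 (fun s => -z s)
        intro s
        have : B.mulVec (fun s => -z s) s = 0 := by
          have : (fun s => -z s) = -z := rfl
          rw [this, Matrix.mulVec_neg, hz]; simp
        rw [← this, hBmul]
      funext s
      have := h1 s; have := h2 s
      simp only [Pi.zero_apply]; linarith
    have : B.mulVec (x - y) = 0 := by
      rw [Matrix.mulVec_sub, hxy, sub_self]
    have := key _ this
    exact sub_eq_zero.mp this
  have hBunit : IsUnit B := Matrix.mulVec_injective_iff_isUnit.mp hBinj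
  have hBinv : B * B⁻¹ = 1 := Matrix.mul_nonsing_inv B (Matrix.isUnit_iff_isUnit_det B |>.mp hBunit)
  have hinvB : B⁻¹ * B = 1 := Matrix.nonsing_inv_mul B (Matrix.isUnit_iff_isUnit_det B |>.mp hBunit)
  -- B⁻¹ has nonnegative entries
  have hBinv0 : ∀ t s, 0 ≤ B⁻¹ t s := by
    intro t s
    have hx : ∀ j, 0 ≤ (fun t => B⁻¹ t s) j := by
      apply stmt8_mono_aux Qi hQi0 hQi1 γ hγ0 hγ1
      intro j
      show 0 ≤ B⁻¹ j s - γ * ∑ t, Qi j t * B⁻¹ t s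
      have h : (B * B⁻¹) j s = B⁻¹ j s - γ * ∑ t, Qi j t * B⁻¹ t s := by
        simp only [Matrix.mul_apply, hB, Matrix.of_apply, sub_mul, ite_mul, one_mul, zero_mul]
        rw [Finset.sum_sub_distrib, Finset.sum_ite_eq, if_pos (mem_univ j), Finset.mul_sum]
        simp only [mul_assoc]
      rw [hBinv] at h
      rw [← h]
      by_cases hjs : j = s <;> simp [Matrix.one_apply, hjs]
    exact hx t
  -- converted hypotheses in terms of Qi, Qs
  have hu1' : ∀ s, u s - γ * ∑ t, Qi t s * u t = 1 := hu1
  have hu2' : ∀ s, Vinf s - γ * ∑ t, Qi s t * Vinf t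
      = (∑ a, πinf s a * r s a) + (1 / β) * u s := hu2
  have hbell' : ∀ s, Vstar s - γ * ∑ t, Qs s t * Vstar t = ∑ a, πstar s a * r s a := hbell
  have hgS : ∀ s, (∑ a, πinf s a * r s a) + γ * ∑ t, Qi s t * Vstar t
      ≤ (∑ a, πstar s a * r s a) + γ * ∑ t, Qs s t * Vstar t :=
    hgreedyStar πinf hπinf0 hπinf1
  have hgI : ∀ s, (∑ a, πstar s a * r s a) + γ * ∑ t, Qs s t * Vinf t
      ≤ (∑ a, πinf s a * r s a) + γ * ∑ t, Qi s t * Vinf t :=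
    hgreedyInf πstar hπstar0 hπstar1
  -- u = (Bᵀ)⁻¹ *ᵥ 1, entrywise u s = ∑ t, B⁻¹ t s
  have huT : Matrix.mulVec Bᵀ u = fun _ => 1 := by
    funext s
    have h : Bᵀ.mulVec u s = u s - γ * ∑ t, Qi t s * u t := by
      simp only [Matrix.mulVec, dotProduct, Matrix.transpose_apply, hB, Matrix.of_apply,
        sub_mul, ite_mul, one_mul, zero_mul]
      rw [Finset.sum_sub_distrib, Finset.sum_ite_eq', if_pos (mem_univ s), Finset.mul_sum]
      ring_nf
    rw [h]
    exact hu1' s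
  have huval : ∀ s, u s = ∑ t, B⁻¹ t s := by
    have hTunit : IsUnit Bᵀ.det := by
      rw [Matrix.det_transpose]; exact (Matrix.isUnit_iff_isUnit_det B).mp hBunit
    have heq : u = Matrix.mulVec (Bᵀ)⁻¹ (fun _ => 1) := by
      rw [← huT, Matrix.mulVec_mulVec, Matrix.nonsing_inv_mul _ hTunit, Matrix.one_mulVec]
    intro s
    rw [heq]
    simp only [Matrix.mulVec, dotProduct, mul_one, ← Matrix.transpose_nonsing_inv,
      Matrix.transpose_apply]
  have hu0 : ∀ s, 0 ≤ u s := by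
    intro s; rw [huval s]; exact Finset.sum_nonneg fun t _ => hBinv0 t s
  -- Step B: ∑ u = |S| / (1-γ)
  have husum : ∑ s, u s = (Fintype.card S : ℝ) / (1 - γ) := by
    have h1 : ∑ s, (u s - γ * ∑ t, Qi t s * u t) = (Fintype.card S : ℝ) := by
      simp [hu1']
    have h2 : ∑ s, ∑ t, Qi t s * u t = ∑ t, u t := by
      rw [Finset.sum_comm]
      calc ∑ t, ∑ s, Qi t s * u t = ∑ t, (∑ s, Qi t s) * u t := by
            simp [Finset.sum_mul]
      _ = ∑ t, u t := by simp [hQi1]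
    have h3 : ∑ s, (u s - γ * ∑ t, Qi t s * u t)
        = ∑ s, u s - γ * ∑ s, ∑ t, Qi t s * u t := by
      rw [Finset.sum_sub_distrib, Finset.mul_sum]
    rw [h3, h2] at h1
    rw [eq_div_iff (by linarith : (1:ℝ) - γ ≠ 0)]
    linarith
  have hubd : ∀ s, u s ≤ (Fintype.card S : ℝ) / (1 - γ) := by
    intro s
    rw [← husum]
    exact Finset.single_le_sum (fun t _ => hu0 t) (mem_univ s)
  -- Step C: lower bound
  have hlow : ∀ s, 0 ≤ Vinf s - Vstar s := by
    have := stmt8_mono_aux Qs hQs0 hQs1 γ hγ0 hγ1 (fun s => Vinf s - Vstar s) ?_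
    · intro s; exact this s
    intro s
    show 0 ≤ (Vinf s - Vstar s) - γ * ∑ t, Qs s t * (Vinf t - Vstar t)
    have hsplit : ∑ t, Qs s t * (Vinf t - Vstar t)
        = ∑ t, Qs s t * Vinf t - ∑ t, Qs s t * Vstar t := by
      rw [← Finset.sum_sub_distrib]
      exact Finset.sum_congr rfl fun t _ => by ring
    have h3 : 0 ≤ (1/β) * u s := mul_nonneg (by positivity) (hu0 s)
    have hg := hgI s
    have hb := hbell' s
    have hf := hu2' s
    rw [hsplit]
    linarith
  -- Step D: upper bound
  have hup : ∀ s, Vinf s - Vstar s ≤ ((Fintype.card S : ℝ) / (1 - γ) / β) / (1 - γ) := by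
    have := stmt8_bound_aux Qi hQi0 hQi1 γ hγ0 hγ1 ((Fintype.card S : ℝ) / (1 - γ) / β)
      (fun s => Vinf s - Vstar s) ?_
    · intro s; exact this s
    intro s
    show (Vinf s - Vstar s) - γ * ∑ t, Qi s t * (Vinf t - Vstar t)
      ≤ (Fintype.card S : ℝ) / (1 - γ) / β
    have hsplit : ∑ t, Qi s t * (Vinf t - Vstar t)
        = ∑ t, Qi s t * Vinf t - ∑ t, Qi s t * Vstar t := by
      rw [← Finset.sum_sub_distrib]
      exact Finset.sum_congr rfl fun t _ => by ring
    have hg := hgS s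
    have hb := hbell' s
    have hf := hu2' s
    have h3 : (1/β) * u s ≤ (Fintype.card S : ℝ) / (1 - γ) / β := by
      have h := mul_le_mul_of_nonneg_left (hubd s) (le_of_lt (by positivity : (0:ℝ) < 1/β))
      calc (1/β) * u s ≤ (1/β) * ((Fintype.card S : ℝ) / (1 - γ)) := h
      _ = (Fintype.card S : ℝ) / (1 - γ) / β := by field_simp
    rw [hsplit]
    linarith
  intro s
  refine ⟨hlow s, ?_⟩
  have h := hup s
  have heq : ((Fintype.card S : ℝ) / (1 - γ) / β) / (1 - γ)
      = (Fintype.card S : ℝ) / (β * (1 - γ) ^ 2) := by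
    field_simp
  rw [heq] at h
  exact h
end

section
/- Let V* : S → ℝ satisfy the optimal Bellman equation V*_s = max_a (r(s,a) + γ Σ_t P^a_{st} V*_t) with, for each s, a unique maximizer a*_s of q*(s,a) = r(s,a) + γ Σ_t P^a_{st} V*_t, and let π* be the deterministic policy π*(s,a) = 1 iff a = a*_s. Set g = min_s ( q*(s,a*_s) − max_{a≠a*_s} q*(s,a) ) and assume g > 0 and |A| ≥ 2. Let α satisfy 0 < α < g/3 and let β > |S|/((1 − γ)²α). Suppose (V∞, π∞) is a fixed point, i.e.: there exists u : S → ℝ with (I − γP^{π∞})ᵀu = 𝟙 and (I − γP^{π∞})V∞ = r^{π∞} + (1/β)u, and π∞ is the deterministic policy π∞(s,a) = 1 iff a = a_s, where a_s is a maximizer of a ↦ r(s,a) + γ Σ_t P^a_{st} V∞_t. Then |V∞_s − V*_s| ≤ α for every s ∈ S, and π∞ = π*. -/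
open Finset

lemma aux_u_nonneg {S : Type*} [Fintype S] (γ : ℝ) (hγ0 : 0 < γ) (hγ1 : γ < 1)
    (Q : S → S → ℝ) (hQ0 : ∀ t s, 0 ≤ Q t s) (hQ1 : ∀ t, ∑ s, Q t s = 1)
    (u : S → ℝ) (hu : ∀ s, u s = 1 + γ * ∑ t, Q t s * u t) : ∀ s, 0 ≤ u s := by
  set f : (S → ℝ) → S → ℝ := fun v s => γ * ∑ t, Q t s * v t with hf
  have mono : ∀ v w : S → ℝ, (∀ t, v t ≤ w t) → ∀ s, f v s ≤ f w s := by
    intro v w hvw s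
    exact mul_le_mul_of_nonneg_left
      (Finset.sum_le_sum fun t _ => mul_le_mul_of_nonneg_left (hvw t) (hQ0 t s)) hγ0.le
  have monoN : ∀ n, ∀ v w : S → ℝ, (∀ t, v t ≤ w t) → ∀ s, f^[n] v s ≤ f^[n] w s := by
    intro n
    induction n with
    | zero => intro v w h s; simpa using h s
    | succ n ih =>
      intro v w h s
      rw [Function.iterate_succ_apply, Function.iterate_succ_apply]
      exact ih _ _ (mono v w h) s
  have hfu : ∀ s, f u s ≤ u s := by
    intro s; rw [hu s]; simp [hf]
  have iter : ∀ n s, f^[n] u s ≤ u s := by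
    intro n
    induction n with
    | zero => intro s; simp
    | succ n ih =>
      intro s
      rw [Function.iterate_succ_apply]
      exact le_trans (monoN n _ _ hfu s) (ih s)
  have contract : ∀ v : S → ℝ, ∑ s, |f v s| ≤ γ * ∑ t, |v t| := by
    intro v
    have h1 : ∀ s, |f v s| ≤ γ * ∑ t, Q t s * |v t| := by
      intro s
      rw [hf]
      simp only [abs_mul, abs_of_pos hγ0]
      refine mul_le_mul_of_nonneg_left ?_ hγ0.le
      refine le_trans (Finset.abs_sum_le_sum_abs _ _) (Finset.sum_le_sum fun t _ => ?_)
      rw [abs_mul, abs_of_nonneg (hQ0 t s)]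
    calc ∑ s, |f v s| ≤ ∑ s, γ * ∑ t, Q t s * |v t| := Finset.sum_le_sum fun s _ => h1 s
      _ = γ * ∑ t, (∑ s, Q t s) * |v t| := by
          rw [← Finset.mul_sum, Finset.sum_comm]
          congr 1
          exact Finset.sum_congr rfl fun t _ => by rw [Finset.sum_mul]
      _ = γ * ∑ t, |v t| := by
          congr 1; exact Finset.sum_congr rfl fun t _ => by rw [hQ1 t, one_mul]
  have l1 : ∀ n, ∑ s, |f^[n] u s| ≤ γ ^ n * ∑ t, |u t| := by
    intro n
    induction n with
    | zero => simp
    | succ n ih =>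
      calc ∑ s, |f^[n+1] u s| = ∑ s, |f (f^[n] u) s| := by
            simp [Function.iterate_succ_apply']
        _ ≤ γ * ∑ t, |f^[n] u t| := contract _
        _ ≤ γ * (γ ^ n * ∑ t, |u t|) := mul_le_mul_of_nonneg_left ih hγ0.le
        _ = γ ^ (n+1) * ∑ t, |u t| := by ring
  have key : ∀ n s, -(γ ^ n * ∑ t, |u t|) ≤ u s := by
    intro n s
    have h2 : -|f^[n] u s| ≤ f^[n] u s := neg_abs_le _
    have h3 : |f^[n] u s| ≤ ∑ t, |f^[n] u t| :=
      Finset.single_le_sum (f := fun t => |f^[n] u t|) (fun t _ => abs_nonneg _) (mem_univ s)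
    have := l1 n
    linarith [iter n s]
  intro s
  have hlim : Filter.Tendsto (fun n : ℕ => -(γ ^ n * ∑ t, |u t|)) Filter.atTop (nhds 0) := by
    have := (tendsto_pow_atTop_nhds_zero_of_lt_one hγ0.le hγ1).mul_const (∑ t, |u t|)
    simpa using this.neg
  exact le_of_tendsto hlim (Filter.Eventually.of_forall fun n => key n s)

/-- For the non-regularized MDP, if `β > |S|/((1-γ)²α)` with `0 < α < g/3`
(`g` the action gap of the optimal pair `(V*,π*)`), then any fixed point `(V∞,π∞)` of the
algorithm satisfies `|V∞_s - V*_s| ≤ α` for all `s` and `π∞ = π*`. -/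
theorem stmt9 {S A : Type*} [Fintype S] [Nonempty S] [Fintype A] [Nonempty A] [DecidableEq A]
    (P : A → S → S → ℝ) (hP0 : ∀ a s t, 0 ≤ P a s t) (hP1 : ∀ a s, ∑ t, P a s t = 1)
    (r : S → A → ℝ) (γ : ℝ) (hγ0 : 0 < γ) (hγ1 : γ < 1)
    (hA : 2 ≤ Fintype.card A)
    (Vstar : S → ℝ) (qstar : S → A → ℝ)
    (hqstar : ∀ s a, qstar s a = r s a + γ * ∑ t, P a s t * Vstar t)
    (hbell : ∀ s, Vstar s = Finset.univ.sup' Finset.univ_nonempty (qstar s))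
    (astar : S → A)
    (hastar : ∀ s a, a ≠ astar s → qstar s a < qstar s (astar s))
    (πstar : S → A → ℝ) (hπstar : ∀ s a, πstar s a = if a = astar s then 1 else 0)
    (g : ℝ)
    (hg : g = Finset.univ.inf' Finset.univ_nonempty (fun s =>
        qstar s (astar s) - (Finset.univ.erase (astar s)).sup'
          ((Finset.erase_nonempty (Finset.mem_univ _)).mpr
            (Finset.one_lt_card_iff_nontrivial.mp (by rw [Finset.card_univ]; omega)))
          (qstar s)))
    (hgpos : 0 < g)
    (α β : ℝ) (hα0 : 0 < α) (hα : α < g / 3)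
    (hβ : (Fintype.card S : ℝ) / ((1 - γ) ^ 2 * α) < β)
    (Vinf : S → ℝ) (πinf : S → A → ℝ) (as : S → A)
    -- critic fixed-point equation
    (hfix : ∃ u : S → ℝ,
      (∀ s, u s - γ * ∑ t, (∑ a, πinf t a * P a t s) * u t = 1) ∧
      (∀ s, Vinf s - γ * ∑ t, (∑ a, πinf s a * P a s t) * Vinf t
        = (∑ a, πinf s a * r s a) + (1 / β) * u s))
    -- π∞ is the deterministic policy on a maximizer `a_s` of `a ↦ r(s,a) + γ Σ_t P^a_{st} V∞_t`
    (has : ∀ s a, r s a + γ * ∑ t, P a s t * Vinf t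
        ≤ r s (as s) + γ * ∑ t, P (as s) s t * Vinf t)
    (hπinf : ∀ s a, πinf s a = if a = as s then 1 else 0) :
    (∀ s, |Vinf s - Vstar s| ≤ α) ∧ πinf = πstar := by
  obtain ⟨u, hu1, hu2⟩ := hfix
  have h1γ : 0 < 1 - γ := by linarith
  have hcard : (0:ℝ) < Fintype.card S := by
    exact_mod_cast Fintype.card_pos
  have hβ0 : 0 < β := lt_trans (div_pos hcard (by positivity)) hβ
  -- collapse the policy sums
  have hπP : ∀ t s, ∑ a, πinf t a * P a t s = P (as t) t s := by
    intro t s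
    simp [hπinf, ite_mul]
  have hπr : ∀ s, ∑ a, πinf s a * r s a = r s (as s) := by
    intro s
    simp [hπinf, ite_mul]
  have hu1' : ∀ s, u s = 1 + γ * ∑ t, P (as t) t s * u t := by
    intro s
    have h := hu1 s
    simp only [hπP] at h
    linarith
  have hu2' : ∀ s, Vinf s = r s (as s) + γ * (∑ t, P (as s) s t * Vinf t) + u s / β := by
    intro s
    have h := hu2 s
    simp only [hπP, hπr] at h
    have : (1 / β) * u s = u s / β := by ring
    linarith [h, this]
  -- u is nonnegative
  have hu0 : ∀ s, 0 ≤ u s :=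
    aux_u_nonneg γ hγ0 hγ1 (fun t s => P (as t) t s) (fun t s => hP0 _ t s)
      (fun t => hP1 _ t) u hu1'
  -- sum of u
  have husum : ∑ s, u s = (Fintype.card S : ℝ) / (1 - γ) := by
    have h2 : ∑ s, (u s - γ * ∑ t, P (as t) t s * u t) = (Fintype.card S : ℝ) := by
      have he : ∀ s : S, u s - γ * ∑ t, P (as t) t s * u t = 1 := fun s => by
        rw [hu1' s]; ring
      rw [Finset.sum_congr rfl fun s _ => he s]
      simp [Finset.card_univ]
    have h3 : ∑ s : S, ∑ t, P (as t) t s * u t = ∑ t, u t := by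
      rw [Finset.sum_comm]
      refine Finset.sum_congr rfl fun t _ => ?_
      rw [← Finset.sum_mul, hP1, one_mul]
    rw [Finset.sum_sub_distrib, ← Finset.mul_sum, h3] at h2
    rw [eq_div_iff (by linarith)]
    linarith
  have hubd : ∀ s, u s ≤ (Fintype.card S : ℝ) / (1 - γ) := by
    intro s
    rw [← husum]
    exact Finset.single_le_sum (fun t _ => hu0 t) (Finset.mem_univ s)
  -- numeric bound
  have hD : (Fintype.card S : ℝ) / (β * (1 - γ) ^ 2) < α := by
    rw [div_lt_iff₀ (by positivity)]
    have h := (div_lt_iff₀ (by positivity)).mp hβ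
    nlinarith
  set c : ℝ := (Fintype.card S : ℝ) / (β * (1 - γ)) with hc
  have hεbd : ∀ s, u s / β ≤ c := by
    intro s
    calc u s / β ≤ (↑(Fintype.card S) / (1 - γ)) / β := by gcongr; exact hubd s
      _ = c := by rw [hc, div_div, mul_comm]
  -- upper bound: max of Vinf - Vstar
  have hqV : ∀ s a, qstar s a ≤ Vstar s := by
    intro s a
    rw [hbell s]
    exact Finset.le_sup' _ (Finset.mem_univ a)
  have hVq : ∀ s, Vstar s = qstar s (astar s) := by
    intro s
    rw [hbell s]
    refine le_antisymm (Finset.sup'_le _ _ fun a _ => ?_) (Finset.le_sup' _ (Finset.mem_univ _))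
    by_cases h : a = astar s
    · rw [h]
    · exact (hastar s a h).le
  set m : ℝ := Finset.univ.sup' Finset.univ_nonempty (fun s => Vinf s - Vstar s) with hm
  have hmle : ∀ s, Vinf s - Vstar s ≤ m := fun s =>
    Finset.le_sup' (fun s => Vinf s - Vstar s) (Finset.mem_univ s)
  have hmbd : m ≤ c / (1 - γ) := by
    obtain ⟨s0, -, hs0⟩ := Finset.exists_mem_eq_sup' Finset.univ_nonempty
      (fun s => Vinf s - Vstar s)
    have step : ∑ t, P (as s0) s0 t * Vinf t - ∑ t, P (as s0) s0 t * Vstar t ≤ m := by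
      rw [← Finset.sum_sub_distrib]
      calc ∑ t, (P (as s0) s0 t * Vinf t - P (as s0) s0 t * Vstar t)
          = ∑ t, P (as s0) s0 t * (Vinf t - Vstar t) :=
            Finset.sum_congr rfl fun t _ => by ring
        _ ≤ ∑ t, P (as s0) s0 t * m :=
            Finset.sum_le_sum fun t _ =>
              mul_le_mul_of_nonneg_left (hmle t) (hP0 _ _ _)
        _ = m := by rw [← Finset.sum_mul, hP1, one_mul]
    have hq := hqV s0 (as s0)
    rw [hqstar s0 (as s0)] at hq
    have hv := hu2' s0
    have hε := hεbd s0
    have hγstep := mul_le_mul_of_nonneg_left step hγ0.le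
    rw [← hm] at hs0
    have hmγ : m ≤ γ * m + c := by
      rw [mul_sub] at hγstep
      linarith [hs0.le, hs0.ge]
    rw [le_div_iff₀ h1γ]
    linarith
  have hmα : m ≤ α := le_trans hmbd (by
    rw [hc, div_div]
    have : β * (1 - γ) * (1 - γ) = β * (1 - γ) ^ 2 := by ring
    rw [this]
    exact hD.le)
  -- lower bound: max of Vstar - Vinf is ≤ 0
  set M : ℝ := Finset.univ.sup' Finset.univ_nonempty (fun s => Vstar s - Vinf s) with hM
  have hMle : ∀ s, Vstar s - Vinf s ≤ M := fun s =>
    Finset.le_sup' (fun s => Vstar s - Vinf s) (Finset.mem_univ s)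
  have hMbd : M ≤ 0 := by
    obtain ⟨s1, -, hs1⟩ := Finset.exists_mem_eq_sup' Finset.univ_nonempty
      (fun s => Vstar s - Vinf s)
    have step : ∑ t, P (astar s1) s1 t * Vstar t - ∑ t, P (astar s1) s1 t * Vinf t ≤ M := by
      rw [← Finset.sum_sub_distrib]
      calc ∑ t, (P (astar s1) s1 t * Vstar t - P (astar s1) s1 t * Vinf t)
          = ∑ t, P (astar s1) s1 t * (Vstar t - Vinf t) :=
            Finset.sum_congr rfl fun t _ => by ring
        _ ≤ ∑ t, P (astar s1) s1 t * M :=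
            Finset.sum_le_sum fun t _ =>
              mul_le_mul_of_nonneg_left (hMle t) (hP0 _ _ _)
        _ = M := by rw [← Finset.sum_mul, hP1, one_mul]
    have hq := hVq s1
    rw [hqstar s1 (astar s1)] at hq
    have hv := hu2' s1
    have hopt := has s1 (astar s1)
    have hε0 : 0 ≤ u s1 / β := div_nonneg (hu0 s1) hβ0.le
    have hγstep := mul_le_mul_of_nonneg_left step hγ0.le
    rw [← hM] at hs1
    have hMγ : M ≤ γ * M := by
      rw [mul_sub] at hγstep
      linarith [hs1.le, hs1.ge]
    nlinarith
  have goal1 : ∀ s, |Vinf s - Vstar s| ≤ α := by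
    intro s
    rw [abs_le]
    constructor
    · have := hMle s
      linarith
    · linarith [hmle s]
  refine ⟨goal1, ?_⟩
  -- policy identification
  have haseq : ∀ s, as s = astar s := by
    intro s
    by_contra hne
    have hdiff : ∀ a : A, |∑ t, P a s t * Vinf t - ∑ t, P a s t * Vstar t| ≤ α := by
      intro a
      rw [← Finset.sum_sub_distrib]
      calc |∑ t, (P a s t * Vinf t - P a s t * Vstar t)|
          ≤ ∑ t, |P a s t * Vinf t - P a s t * Vstar t| := Finset.abs_sum_le_sum_abs _ _
        _ = ∑ t, P a s t * |Vinf t - Vstar t| := Finset.sum_congr rfl fun t _ => by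
            rw [← mul_sub, abs_mul, abs_of_nonneg (hP0 a s t)]
        _ ≤ ∑ t, P a s t * α :=
            Finset.sum_le_sum fun t _ =>
              mul_le_mul_of_nonneg_left (goal1 t) (hP0 a s t)
        _ = α := by rw [← Finset.sum_mul, hP1, one_mul]
    have hgap : g ≤ qstar s (astar s) -
        (Finset.univ.erase (astar s)).sup'
          ((Finset.erase_nonempty (Finset.mem_univ _)).mpr
            (Finset.one_lt_card_iff_nontrivial.mp (by rw [Finset.card_univ]; omega)))
          (qstar s) := by
      rw [hg]
      exact Finset.inf'_le _ (Finset.mem_univ s)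
    have hmem : as s ∈ Finset.univ.erase (astar s) :=
      Finset.mem_erase.mpr ⟨hne, Finset.mem_univ _⟩
    have hle : qstar s (as s) ≤ (Finset.univ.erase (astar s)).sup'
          ((Finset.erase_nonempty (Finset.mem_univ _)).mpr
            (Finset.one_lt_card_iff_nontrivial.mp (by rw [Finset.card_univ]; omega)))
          (qstar s) := Finset.le_sup' _ hmem
    have hopt := has s (astar s)
    have h1 := abs_le.mp (hdiff (astar s))
    have h2 := abs_le.mp (hdiff (as s))
    have e1 := hqstar s (astar s)
    have e2 := hqstar s (as s)
    have k1 : γ * (∑ t, P (astar s) s t * Vstar t - ∑ t, P (astar s) s t * Vinf t)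
        ≤ γ * α := mul_le_mul_of_nonneg_left (by linarith [h1.1]) hγ0.le
    have k2 : γ * (∑ t, P (as s) s t * Vinf t - ∑ t, P (as s) s t * Vstar t)
        ≤ γ * α := mul_le_mul_of_nonneg_left (by linarith [h2.2]) hγ0.le
    have hγα : γ * α < α := by nlinarith
    rw [mul_sub] at k1 k2
    linarith
  funext s a
  rw [hπinf, hπstar, haseq s]
end

section
/- Let λ > 0 and ε > 0 with β > 2|S|/(ε(1 − γ)²). Let V∞ : S → ℝ, q∞(s,a) = r(s,a) + γ Σ_t P^a_{st} V∞_t, and let π∞ be the Boltzmann policy π∞(s,a) = exp(q∞(s,a)/λ)/Σ_b exp(q∞(s,b)/λ). Suppose V∞ satisfies the uniform-distribution critic fixed-point equation for π∞: there exists u : S → ℝ with (I − γP^{π∞})ᵀu = 𝟙 and (I − γP^{π∞})V∞ = r^{π∞} − λH(π∞) + (1/β)u. Let (V*_λ, π*_λ) be a regularized optimal pair, meaning: π*_λ(s,a) = exp(q*(s,a)/λ)/Σ_b exp(q*(s,b)/λ) with q*(s,a) = r(s,a) + γ Σ_t P^a_{st} (V*_λ)_t; (I − γP^{π*_λ})V*_λ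 + λH(π*_λ) = r^{π*_λ}; and for every policy μ, (r^{π*_λ} + γP^{π*_λ}V*_λ − λH(π*_λ))_s ≥ (r^μ + γP^μ V*_λ − λH(μ))_s for all s. Then for every s ∈ S: |V∞_s − (V*_λ)_s| < ε/2, and D_KL(π*_λ(s,·) ‖ π∞(s,·)) ≤ εγ/λ. -/
open Finset

/-- log-sum-exp monotone/Lipschitz lemma -/
lemma lse_mono {A : Type*} [Fintype A] [Nonempty A] (f g : A → ℝ) (c : ℝ)
    (h : ∀ a, f a ≤ g a + c) :
    Real.log (∑ a, Real.exp (f a)) ≤ Real.log (∑ a, Real.exp (g a)) + c := by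
  have hpos : (0:ℝ) < ∑ a, Real.exp (g a) :=
    Finset.sum_pos (fun a _ => Real.exp_pos _) univ_nonempty
  have h1 : ∑ a, Real.exp (f a) ≤ Real.exp c * ∑ a, Real.exp (g a) := by
    rw [Finset.mul_sum]
    exact Finset.sum_le_sum fun a _ => by
      rw [← Real.exp_add]; exact Real.exp_le_exp.2 (by linarith [h a])
  calc Real.log (∑ a, Real.exp (f a)) ≤ Real.log (Real.exp c * ∑ a, Real.exp (g a)) :=
        Real.log_le_log (Finset.sum_pos (fun a _ => Real.exp_pos _) univ_nonempty) h1
    _ = Real.log (∑ a, Real.exp (g a)) + c := by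
        rw [Real.log_mul (Real.exp_ne_zero c) (ne_of_gt hpos), Real.log_exp]; ring

/-- Boltzmann value identity -/
lemma boltzmann_value {A : Type*} [Fintype A] [Nonempty A] (lam : ℝ) (hlam : 0 < lam)
    (q π : A → ℝ) (hπ : ∀ a, π a = Real.exp (q a / lam) / ∑ b, Real.exp (q b / lam)) :
    (∑ a, π a * q a) - lam * ∑ a, π a * Real.log (π a)
      = lam * Real.log (∑ b, Real.exp (q b / lam)) := by
  set Z : ℝ := ∑ b, Real.exp (q b / lam) with hZ
  have hZpos : 0 < Z := Finset.sum_pos (fun a _ => Real.exp_pos _) univ_nonempty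
  have hsum : ∑ a, π a = 1 := by
    simp only [hπ, ← Finset.sum_div]
    exact div_self (ne_of_gt hZpos)
  have hlog : ∀ a, Real.log (π a) = q a / lam - Real.log Z := by
    intro a
    rw [hπ a, Real.log_div (Real.exp_ne_zero _) (ne_of_gt hZpos), Real.log_exp]
  have : ∑ a, π a * Real.log (π a) = (∑ a, π a * q a) / lam - Real.log Z := by
    simp only [hlog, mul_sub]
    rw [Finset.sum_sub_distrib, ← Finset.sum_mul, hsum, one_mul, Finset.sum_div]
    congr 1
    exact Finset.sum_congr rfl fun a _ => by field_simp
  rw [this]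
  field_simp
  ring

lemma u_bound {S : Type*} [Fintype S] [Nonempty S] [DecidableEq S] (Q : Matrix S S ℝ)
    (hQ0 : ∀ s t, 0 ≤ Q s t) (hQ1 : ∀ s, ∑ t, Q s t = 1)
    (γ : ℝ) (hγ0 : 0 < γ) (hγ1 : γ < 1)
    (u : S → ℝ) (hu : ∀ s, u s - γ * ∑ t, Q t s * u t = 1) :
    ∀ s, 0 ≤ u s ∧ u s ≤ (Fintype.card S : ℝ) / (1 - γ) := by
  have hpow0 : ∀ (k : ℕ) (s t : S), 0 ≤ (Q ^ k) s t := by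
    intro k
    induction k with
    | zero => intro s t; rw [pow_zero]; by_cases h : s = t <;> simp [Matrix.one_apply, h]
    | succ k ih =>
      intro s t
      rw [pow_succ, Matrix.mul_apply]
      exact Finset.sum_nonneg fun j _ => mul_nonneg (ih s j) (hQ0 j t)
  have hpow1 : ∀ (k : ℕ) (s : S), ∑ t, (Q ^ k) s t = 1 := by
    intro k
    induction k with
    | zero => intro s; simp [Matrix.one_apply]
    | succ k ih =>
      intro s
      simp only [pow_succ, Matrix.mul_apply]
      rw [Finset.sum_comm]
      calc ∑ j, ∑ t, (Q ^ k) s j * Q j t = ∑ j, (Q ^ k) s j * ∑ t, Q j t := by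
            simp [Finset.mul_sum]
        _ = 1 := by simp only [hQ1, mul_one]; exact ih s
  have hpowle : ∀ (k : ℕ) (s t : S), (Q ^ k) s t ≤ 1 := by
    intro k s t
    calc (Q ^ k) s t ≤ ∑ t', (Q ^ k) s t' :=
          Finset.single_le_sum (fun j _ => hpow0 k s j) (Finset.mem_univ t)
      _ = 1 := hpow1 k s
  intro s0
  set T : ℕ → ℝ := fun k => ∑ s, u s * (Q ^ k) s s0 with hT
  set C : ℕ → ℝ := fun k => ∑ s, (Q ^ k) s s0 with hC
  have hu' : ∀ s, u s = 1 + γ * ∑ t, Q t s * u t := fun s => by linarith [hu s]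
  have hTrec : ∀ k, T k = C k + γ * T (k + 1) := by
    intro k
    have : T k = ∑ s, (1 + γ * ∑ t, Q t s * u t) * (Q ^ k) s s0 := by
      simp only [hT]
      exact Finset.sum_congr rfl fun s _ => by rw [← hu' s]
    rw [this]
    have expand : ∑ s, (1 + γ * ∑ t, Q t s * u t) * (Q ^ k) s s0
        = (∑ s, (Q ^ k) s s0) + γ * ∑ s, (∑ t, Q t s * u t) * (Q ^ k) s s0 := by
      rw [Finset.mul_sum, ← Finset.sum_add_distrib]
      exact Finset.sum_congr rfl fun s _ => by ring
    rw [expand]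
    congr 1
    congr 1
    -- ∑ s, (∑ t, Q t s * u t) * (Q^k) s s0 = T (k+1)
    have swap : ∑ s, (∑ t, Q t s * u t) * (Q ^ k) s s0
        = ∑ t, u t * ∑ s, Q t s * (Q ^ k) s s0 := by
      simp only [Finset.sum_mul]
      rw [Finset.sum_comm]
      refine Finset.sum_congr rfl fun t _ => ?_
      rw [Finset.mul_sum]
      exact Finset.sum_congr rfl fun s _ => by ring
    rw [swap]
    refine Finset.sum_congr rfl fun t _ => ?_
    congr 1
    rw [pow_succ', Matrix.mul_apply]
  -- iterate
  have hiter : ∀ N, T 0 = (∑ k ∈ Finset.range N, γ ^ k * C k) + γ ^ N * T N := by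
    intro N
    induction N with
    | zero => simp
    | succ N ih =>
      rw [ih, Finset.sum_range_succ, hTrec N]
      ring
  have hT0 : T 0 = u s0 := by
    simp only [hT, pow_zero, Matrix.one_apply]
    rw [Finset.sum_eq_single s0]
    · simp
    · intro b _ hb; simp [hb]
    · intro h; exact absurd (Finset.mem_univ s0) h
  have hCnn : ∀ k, 0 ≤ C k := fun k => Finset.sum_nonneg fun s _ => hpow0 k s s0
  have hCle : ∀ k, C k ≤ (Fintype.card S : ℝ) := by
    intro k
    calc C k ≤ ∑ _s : S, (1:ℝ) := Finset.sum_le_sum fun s _ => hpowle k s s0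
      _ = (Fintype.card S : ℝ) := by simp
  have hpartial : ∀ N, 0 ≤ ∑ k ∈ Finset.range N, γ ^ k * C k ∧
      (∑ k ∈ Finset.range N, γ ^ k * C k) ≤ (Fintype.card S : ℝ) / (1 - γ) := by
    intro N
    constructor
    · exact Finset.sum_nonneg fun k _ => mul_nonneg (pow_nonneg hγ0.le k) (hCnn k)
    · calc (∑ k ∈ Finset.range N, γ ^ k * C k)
          ≤ ∑ k ∈ Finset.range N, γ ^ k * (Fintype.card S : ℝ) :=
            Finset.sum_le_sum fun k _ => by
              exact mul_le_mul_of_nonneg_left (hCle k) (pow_nonneg hγ0.le k)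
        _ = (∑ k ∈ Finset.range N, γ ^ k) * (Fintype.card S : ℝ) := by
            rw [Finset.sum_mul]
        _ ≤ (1 / (1 - γ)) * (Fintype.card S : ℝ) := by
            apply mul_le_mul_of_nonneg_right _ (Nat.cast_nonneg _)
            rw [geom_sum_eq (by linarith : γ ≠ 1)]
            have heq : (γ ^ N - 1) / (γ - 1) = (1 - γ ^ N) / (1 - γ) := by
              rw [← neg_div_neg_eq]; ring_nf
            rw [heq, div_le_div_iff₀ (by linarith) (by linarith)]
            nlinarith [pow_nonneg hγ0.le N]
        _ = (Fintype.card S : ℝ) / (1 - γ) := by ring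
  set U : ℝ := ∑ s, |u s| with hU
  have hUnn : 0 ≤ U := Finset.sum_nonneg fun s _ => abs_nonneg _
  have hTbd : ∀ N, |T N| ≤ U := by
    intro N
    calc |T N| ≤ ∑ s, |u s * (Q ^ N) s s0| := Finset.abs_sum_le_sum_abs _ _
      _ ≤ ∑ s, |u s| := Finset.sum_le_sum fun s _ => by
          rw [abs_mul, abs_of_nonneg (hpow0 N s s0)]
          exact mul_le_of_le_one_right (abs_nonneg _) (hpowle N s s0)
      _ = U := rfl
  have hlim : Filter.Tendsto (fun N : ℕ => γ ^ N * U) Filter.atTop (nhds 0) := by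
    have := (tendsto_pow_atTop_nhds_zero_of_lt_one hγ0.le hγ1).mul_const U
    simpa using this
  constructor
  · -- 0 ≤ u s0
    have : ∀ N, -(γ ^ N * U) ≤ u s0 := by
      intro N
      have := hiter N
      rw [hT0] at this
      have h1 : -(γ ^ N * U) ≤ γ ^ N * T N := by
        have := (abs_le.1 (hTbd N)).1
        have hg : (0:ℝ) ≤ γ ^ N := pow_nonneg hγ0.le N
        nlinarith
      linarith [(hpartial N).1]
    have : (0:ℝ) ≤ u s0 := by
      have hlim' : Filter.Tendsto (fun N : ℕ => -(γ ^ N * U)) Filter.atTop (nhds 0) := by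
        simpa using hlim.neg
      exact le_of_tendsto' hlim' this
    exact this
  · -- upper bound
    have hub : ∀ N, u s0 ≤ (Fintype.card S : ℝ) / (1 - γ) + γ ^ N * U := by
      intro N
      have := hiter N
      rw [hT0] at this
      have h1 : γ ^ N * T N ≤ γ ^ N * U := by
        have := (abs_le.1 (hTbd N)).2
        have hg : (0:ℝ) ≤ γ ^ N := pow_nonneg hγ0.le N
        nlinarith
      linarith [(hpartial N).2]
    have hlim2 : Filter.Tendsto (fun N : ℕ => (Fintype.card S : ℝ) / (1 - γ) + γ ^ N * U)
        Filter.atTop (nhds ((Fintype.card S : ℝ) / (1 - γ))) := by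
      simpa using (tendsto_const_nhds.add hlim)
    exact ge_of_tendsto' hlim2 hub

lemma swap_q {S A : Type*} [Fintype S] [Fintype A]
    (π : A → ℝ) (P : A → S → ℝ) (V : S → ℝ) (γ : ℝ) :
    γ * ∑ t, (∑ a, π a * P a t) * V t = ∑ a, π a * (γ * ∑ t, P a t * V t) := by
  simp only [Finset.mul_sum, Finset.sum_mul]
  rw [Finset.sum_comm]
  exact Finset.sum_congr rfl fun a _ => Finset.sum_congr rfl fun t _ => by ring

/-- If `β > 2|S|/(ε(1-γ)²)`, then the fixed point `(V∞, π∞)` satisfies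
`|V∞_s - (V*_λ)_s| < ε/2` and `D_KL(π*_λ(s,·) ‖ π∞(s,·)) ≤ εγ/λ` for every `s`. -/
theorem stmt15 {S A : Type*} [Fintype S] [Nonempty S] [Fintype A] [Nonempty A]
    (P : A → S → S → ℝ) (hP0 : ∀ a s t, 0 ≤ P a s t) (hP1 : ∀ a s, ∑ t, P a s t = 1)
    (r : S → A → ℝ) (γ : ℝ) (hγ0 : 0 < γ) (hγ1 : γ < 1)
    (lam β ε : ℝ) (hlam : 0 < lam) (hε : 0 < ε)
    (hβ : 2 * (Fintype.card S : ℝ) / (ε * (1 - γ) ^ 2) < β)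
    (Vinf : S → ℝ) (qinf : S → A → ℝ)
    (hqinf : ∀ s a, qinf s a = r s a + γ * ∑ t, P a s t * Vinf t)
    (πinf : S → A → ℝ)
    (hπinf : ∀ s a, πinf s a = Real.exp (qinf s a / lam) / ∑ b, Real.exp (qinf s b / lam))
    -- uniform-distribution critic fixed-point equation for π∞
    (hfix : ∃ u : S → ℝ,
      (∀ s, u s - γ * ∑ t, (∑ a, πinf t a * P a t s) * u t = 1) ∧
      (∀ s, Vinf s - γ * ∑ t, (∑ a, πinf s a * P a s t) * Vinf t
        = (∑ a, πinf s a * r s a) - lam * (∑ a, πinf s a * Real.log (πinf s a)) + (1 / β) * u s))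
    (Vsl : S → ℝ) (qsl : S → A → ℝ)
    (hqsl : ∀ s a, qsl s a = r s a + γ * ∑ t, P a s t * Vsl t)
    (πsl : S → A → ℝ)
    -- π*_λ is the Boltzmann policy of q*
    (hπsl : ∀ s a, πsl s a = Real.exp (qsl s a / lam) / ∑ b, Real.exp (qsl s b / lam))
    -- regularized Bellman equation for (V*_λ, π*_λ)
    (hbell : ∀ s, Vsl s - γ * ∑ t, (∑ a, πsl s a * P a s t) * Vsl t
        + lam * ∑ a, πsl s a * Real.log (πsl s a) = ∑ a, πsl s a * r s a)
    -- π*_λ is regularized-greedy for V*_λ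
    (hopt : ∀ μ : S → A → ℝ, (∀ s a, 0 ≤ μ s a) → (∀ s, ∑ a, μ s a = 1) → ∀ s,
      (∑ a, μ s a * r s a) + γ * ∑ t, (∑ a, μ s a * P a s t) * Vsl t
          - lam * ∑ a, μ s a * Real.log (μ s a)
        ≤ (∑ a, πsl s a * r s a) + γ * ∑ t, (∑ a, πsl s a * P a s t) * Vsl t
          - lam * ∑ a, πsl s a * Real.log (πsl s a)) :
    ∀ s, |Vinf s - Vsl s| < ε / 2 ∧
      ∑ a, πsl s a * (Real.log (πsl s a) - Real.log (πinf s a)) ≤ ε * γ / lam := by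
  classical
  obtain ⟨u, hu1, hu2⟩ := hfix
  set c : ℝ := (Fintype.card S : ℝ) with hc
  have hc1 : (1:ℝ) ≤ c := by
    have h : 1 ≤ Fintype.card S := Fintype.card_pos
    rw [hc]; exact_mod_cast h
  have h1γ : (0:ℝ) < 1 - γ := by linarith
  have hβ0 : (0:ℝ) < β :=
    lt_trans (div_pos (by linarith) (mul_pos hε (pow_pos h1γ 2))) hβ
  -- partition-function positivity
  have hZinf : ∀ s, (0:ℝ) < ∑ b, Real.exp (qinf s b / lam) :=
    fun s => Finset.sum_pos (fun b _ => Real.exp_pos _) Finset.univ_nonempty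
  have hZsl : ∀ s, (0:ℝ) < ∑ b, Real.exp (qsl s b / lam) :=
    fun s => Finset.sum_pos (fun b _ => Real.exp_pos _) Finset.univ_nonempty
  have hπinf_pos : ∀ s a, 0 < πinf s a := fun s a => by
    rw [hπinf]; exact div_pos (Real.exp_pos _) (hZinf s)
  have hπinf_sum : ∀ s, ∑ a, πinf s a = 1 := fun s => by
    simp only [hπinf, ← Finset.sum_div]; exact div_self (ne_of_gt (hZinf s))
  have hπsl_pos : ∀ s a, 0 < πsl s a := fun s a => by
    rw [hπsl]; exact div_pos (Real.exp_pos _) (hZsl s)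
  have hπsl_sum : ∀ s, ∑ a, πsl s a = 1 := fun s => by
    simp only [hπsl, ← Finset.sum_div]; exact div_self (ne_of_gt (hZsl s))
  -- bound on u
  have hu_bd : ∀ s, |u s| ≤ c / (1 - γ) := by
    have := u_bound (S := S) (Matrix.of fun s t => ∑ a, πinf s a * P a s t)
      (fun s t => Finset.sum_nonneg fun a _ => mul_nonneg (hπinf_pos s a).le (hP0 a s t))
      (fun s => by
        simp only [Matrix.of_apply]
        rw [Finset.sum_comm]
        calc ∑ a, ∑ t, πinf s a * P a s t = ∑ a, πinf s a * ∑ t, P a s t := by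
              simp [Finset.mul_sum]
          _ = 1 := by simp only [hP1, mul_one]; exact hπinf_sum s)
      γ hγ0 hγ1 u (fun s => hu1 s)
    intro s
    rcases this s with ⟨h0, h1⟩
    rw [abs_of_nonneg h0]; exact h1
  -- fixed-point identities
  have hVinf : ∀ s, Vinf s
      = lam * Real.log (∑ b, Real.exp (qinf s b / lam)) + (1 / β) * u s := by
    intro s
    have h2 := hu2 s
    have hq : γ * ∑ t, (∑ a, πinf s a * P a s t) * Vinf t
        = ∑ a, πinf s a * (qinf s a - r s a) := by
      rw [swap_q]
      exact Finset.sum_congr rfl fun a _ => by rw [hqinf s a]; ring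
    have hbv := boltzmann_value lam hlam (qinf s) (πinf s) (hπinf s)
    have hsplit : ∑ a, πinf s a * (qinf s a - r s a)
        = (∑ a, πinf s a * qinf s a) - ∑ a, πinf s a * r s a := by
      rw [← Finset.sum_sub_distrib]
      exact Finset.sum_congr rfl fun a _ => by ring
    rw [hq, hsplit] at h2
    linarith
  have hVsl : ∀ s, Vsl s = lam * Real.log (∑ b, Real.exp (qsl s b / lam)) := by
    intro s
    have h2 := hbell s
    have hq : γ * ∑ t, (∑ a, πsl s a * P a s t) * Vsl t
        = ∑ a, πsl s a * (qsl s a - r s a) := by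
      rw [swap_q]
      exact Finset.sum_congr rfl fun a _ => by rw [hqsl s a]; ring
    have hbv := boltzmann_value lam hlam (qsl s) (πsl s) (hπsl s)
    have hsplit : ∑ a, πsl s a * (qsl s a - r s a)
        = (∑ a, πsl s a * qsl s a) - ∑ a, πsl s a * r s a := by
      rw [← Finset.sum_sub_distrib]
      exact Finset.sum_congr rfl fun a _ => by ring
    rw [hq, hsplit] at h2
    linarith
  -- sup norm of the difference
  set D : ℝ := Finset.univ.sup' Finset.univ_nonempty (fun s => |Vinf s - Vsl s|) with hD
  have hD_le : ∀ s, |Vinf s - Vsl s| ≤ D := fun s => Finset.le_sup' (fun s => |Vinf s - Vsl s|) (Finset.mem_univ s)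
  have hD0 : 0 ≤ D := le_trans (abs_nonneg _) (hD_le (Classical.arbitrary S))
  -- q-difference bound
  have hqdiff : ∀ s a, |qinf s a - qsl s a| ≤ γ * D := by
    intro s a
    have hexp : qinf s a - qsl s a = γ * ∑ t, P a s t * (Vinf t - Vsl t) := by
      rw [hqinf, hqsl]
      have hss : ∑ t, P a s t * (Vinf t - Vsl t)
          = (∑ t, P a s t * Vinf t) - ∑ t, P a s t * Vsl t := by
        rw [← Finset.sum_sub_distrib]
        exact Finset.sum_congr rfl fun t _ => by ring
      rw [hss]; ring
    rw [hexp, abs_mul, abs_of_pos hγ0]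
    apply mul_le_mul_of_nonneg_left _ hγ0.le
    calc |∑ t, P a s t * (Vinf t - Vsl t)| ≤ ∑ t, |P a s t * (Vinf t - Vsl t)| :=
          Finset.abs_sum_le_sum_abs _ _
      _ ≤ ∑ t, P a s t * D := Finset.sum_le_sum fun t _ => by
          rw [abs_mul, abs_of_nonneg (hP0 a s t)]
          exact mul_le_mul_of_nonneg_left (hD_le t) (hP0 a s t)
      _ = D := by rw [← Finset.sum_mul, hP1, one_mul]
  -- log-partition-difference bound
  have key : ∀ x y : ℝ, x ≤ y + γ * D / lam → lam * x ≤ lam * y + γ * D := by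
    intro x y h
    have h2 := mul_le_mul_of_nonneg_left h hlam.le
    have h3 : lam * (y + γ * D / lam) = lam * y + γ * D := by field_simp
    linarith
  have hlse_le : ∀ s, lam * Real.log (∑ b, Real.exp (qinf s b / lam))
      ≤ lam * Real.log (∑ b, Real.exp (qsl s b / lam)) + γ * D := by
    intro s
    refine key _ _ (lse_mono (fun a => qinf s a / lam) (fun a => qsl s a / lam) (γ * D / lam)
      (fun a => ?_))
    rw [← add_div, div_le_div_iff₀ hlam hlam]
    have := (abs_le.1 (hqdiff s a)).2
    nlinarith
  have hlse_ge : ∀ s, lam * Real.log (∑ b, Real.exp (qsl s b / lam))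
      ≤ lam * Real.log (∑ b, Real.exp (qinf s b / lam)) + γ * D := by
    intro s
    refine key _ _ (lse_mono (fun a => qsl s a / lam) (fun a => qinf s a / lam) (γ * D / lam)
      (fun a => ?_))
    rw [← add_div, div_le_div_iff₀ hlam hlam]
    have := (abs_le.1 (hqdiff s a)).1
    nlinarith
  -- contraction inequality at the maximizer
  obtain ⟨s0, -, hs0⟩ := Finset.exists_mem_eq_sup' (Finset.univ_nonempty (α := S))
    (fun s => |Vinf s - Vsl s|)
  have hkey : D ≤ γ * D + (c / (1 - γ)) / β := by
    have hdiff : Vinf s0 - Vsl s0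
        = (lam * Real.log (∑ b, Real.exp (qinf s0 b / lam))
            - lam * Real.log (∑ b, Real.exp (qsl s0 b / lam))) + (1 / β) * u s0 := by
      rw [hVinf s0, hVsl s0]; ring
    have h1 : |Vinf s0 - Vsl s0| ≤ γ * D + (1 / β) * |u s0| := by
      rw [hdiff]
      calc _ ≤ |lam * Real.log (∑ b, Real.exp (qinf s0 b / lam))
            - lam * Real.log (∑ b, Real.exp (qsl s0 b / lam))| + |(1 / β) * u s0| :=
            abs_add_le _ _
        _ ≤ γ * D + (1 / β) * |u s0| := by
            gcongr
            · rw [abs_sub_le_iff]; constructor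
              · linarith [hlse_le s0]
              · linarith [hlse_ge s0]
            · rw [abs_mul, abs_of_pos (by positivity : (0:ℝ) < 1 / β)]
    have h2 : (1 / β) * |u s0| ≤ (c / (1 - γ)) / β := by
      rw [one_div, inv_mul_eq_div]
      gcongr
      exact hu_bd s0
    calc D = |Vinf s0 - Vsl s0| := hs0
      _ ≤ γ * D + (1 / β) * |u s0| := h1
      _ ≤ γ * D + (c / (1 - γ)) / β := by linarith
  -- D < ε/2
  have hDlt : D < ε / 2 := by
    have h3 : D * (1 - γ) ≤ (c / (1 - γ)) / β := by linarith
    have h4 : D * (1 - γ) * ((1 - γ) * β) ≤ c := by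
      have := (le_div_iff₀ hβ0).1 h3
      calc D * (1 - γ) * ((1 - γ) * β) = (D * (1 - γ) * β) * (1 - γ) := by ring
        _ ≤ (c / (1 - γ)) * (1 - γ) := by
            apply mul_le_mul_of_nonneg_right this h1γ.le
        _ = c := by field_simp
    have h2c : 2 * c < β * (ε * (1 - γ) ^ 2) := by
      rw [div_lt_iff₀ (by positivity)] at hβ
      linarith
    nlinarith [mul_pos hβ0 (mul_pos hε (pow_pos h1γ 2))]
  intro s
  refine ⟨lt_of_le_of_lt (hD_le s) hDlt, ?_⟩
  -- KL bound
  have hlogsl : ∀ a, Real.log (πsl s a)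
      = qsl s a / lam - Real.log (∑ b, Real.exp (qsl s b / lam)) := by
    intro a
    rw [hπsl, Real.log_div (Real.exp_ne_zero _) (ne_of_gt (hZsl s)), Real.log_exp]
  have hloginf : ∀ a, Real.log (πinf s a)
      = qinf s a / lam - Real.log (∑ b, Real.exp (qinf s b / lam)) := by
    intro a
    rw [hπinf, Real.log_div (Real.exp_ne_zero _) (ne_of_gt (hZinf s)), Real.log_exp]
  have hKL : ∑ a, πsl s a * (Real.log (πsl s a) - Real.log (πinf s a))
      = (∑ a, πsl s a * ((qsl s a - qinf s a) / lam))
        + (Real.log (∑ b, Real.exp (qinf s b / lam))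
            - Real.log (∑ b, Real.exp (qsl s b / lam))) := by
    have : ∀ a, πsl s a * (Real.log (πsl s a) - Real.log (πinf s a))
        = πsl s a * ((qsl s a - qinf s a) / lam)
          + πsl s a * (Real.log (∑ b, Real.exp (qinf s b / lam))
            - Real.log (∑ b, Real.exp (qsl s b / lam))) := by
      intro a
      rw [hlogsl a, hloginf a]; ring
    rw [Finset.sum_congr rfl fun a _ => this a, Finset.sum_add_distrib, ← Finset.sum_mul,
      hπsl_sum, one_mul]
  rw [hKL]
  have hterm1 : ∑ a, πsl s a * ((qsl s a - qinf s a) / lam) ≤ γ * D / lam := by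
    calc ∑ a, πsl s a * ((qsl s a - qinf s a) / lam)
        ≤ ∑ a, πsl s a * (γ * D / lam) := Finset.sum_le_sum fun a _ => by
          apply mul_le_mul_of_nonneg_left _ (hπsl_pos s a).le
          rw [div_le_div_iff₀ hlam hlam]
          have h := (abs_le.1 (hqdiff s a)).1
          nlinarith
      _ = γ * D / lam := by rw [← Finset.sum_mul, hπsl_sum, one_mul]
  have hterm2 : Real.log (∑ b, Real.exp (qinf s b / lam))
      - Real.log (∑ b, Real.exp (qsl s b / lam)) ≤ γ * D / lam := by
    rw [le_div_iff₀ hlam]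
    nlinarith [hlse_le s]
  have hfin : γ * D / lam + γ * D / lam ≤ ε * γ / lam := by
    rw [← add_div, div_le_div_iff₀ hlam hlam]
    nlinarith [hDlt, mul_pos hγ0 hlam]
  linarith
end

section
/- Let λ > 0. For each policy π let V^π be the unique solution of (I − γP^π)V^π = r^π and V^π_λ the unique solution of (I − γP^π)V^π_λ = r^π − λH(π). Suppose π* is optimal for the unregularized problem: V^{π*}_s ≥ V^π_s for every policy π and every s; and π*_λ is optimal for the regularized problem: (V^{π*_λ}_λ)_s ≥ (V^π_λ)_s for every policy π and every s. Set V* = V^{π*} and V*_λ = V^{π*_λ}_λ. Then 0 ≤ (V*_λ)_s − V*_s ≤ (λ/(1 − γ))·log|A| for every s ∈ S. -/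
open Finset

lemma comp_lemma {S : Type*} [Fintype S] [Nonempty S] (M : S → S → ℝ)
    (hM0 : ∀ s t, 0 ≤ M s t) (hM1 : ∀ s, ∑ t, M s t = 1) {γ : ℝ} (hγ0 : 0 ≤ γ) (hγ1 : γ < 1)
    (u v : S → ℝ)
    (h : ∀ s, u s - γ * ∑ t, M s t * u t ≤ v s - γ * ∑ t, M s t * v t) :
    ∀ s, u s ≤ v s := by
  obtain ⟨s0, -, hs0⟩ := Finset.exists_max_image Finset.univ (fun s => u s - v s) ⟨Classical.arbitrary S, mem_univ _⟩
  have key : u s0 - v s0 ≤ γ * (u s0 - v s0) := by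
    have h1 := h s0
    have h2 : ∑ t, M s0 t * u t - ∑ t, M s0 t * v t ≤ u s0 - v s0 := by
      rw [← Finset.sum_sub_distrib]
      calc ∑ t, (M s0 t * u t - M s0 t * v t) = ∑ t, M s0 t * (u t - v t) := by
            simp [mul_sub]
        _ ≤ ∑ t, M s0 t * (u s0 - v s0) := by
            apply Finset.sum_le_sum
            intro t _
            exact mul_le_mul_of_nonneg_left (hs0 t (mem_univ t)) (hM0 s0 t)
        _ = u s0 - v s0 := by rw [← Finset.sum_mul, hM1, one_mul]
    nlinarith [mul_le_mul_of_nonneg_left h2 hγ0]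
  have hd : u s0 - v s0 ≤ 0 := by nlinarith
  intro s
  have := hs0 s (mem_univ s)
  linarith

lemma exists_sol {S : Type*} [Fintype S] [Nonempty S] [DecidableEq S] (M : S → S → ℝ)
    (hM0 : ∀ s t, 0 ≤ M s t) (hM1 : ∀ s, ∑ t, M s t = 1) {γ : ℝ} (hγ0 : 0 ≤ γ) (hγ1 : γ < 1)
    (c : S → ℝ) : ∃ W : S → ℝ, ∀ s, W s - γ * ∑ t, M s t * W t = c s := by
  set N : Matrix S S ℝ := 1 - γ • Matrix.of M with hN
  have hmv : ∀ (x : S → ℝ) (s : S), N.mulVec x s = x s - γ * ∑ t, M s t * x t := by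
    intro x s
    rw [hN, Matrix.sub_mulVec, Matrix.smul_mulVec, Matrix.one_mulVec]
    simp only [Pi.sub_apply, Pi.smul_apply, smul_eq_mul, Matrix.mulVec, dotProduct,
      Matrix.of_apply]
  have hinj : Function.Injective N.mulVecLin := by
    rw [← LinearMap.ker_eq_bot, LinearMap.ker_eq_bot']
    intro x hx
    have hx0 : ∀ s, N.mulVec x s = 0 := fun s => congrFun hx s
    have h1 : ∀ s, x s ≤ 0 := by
      apply comp_lemma M hM0 hM1 hγ0 hγ1
      intro s
      have := hx0 s
      rw [hmv] at this
      simp [this]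
    have h2 : ∀ s, 0 ≤ x s := by
      apply comp_lemma M hM0 hM1 hγ0 hγ1 (fun _ => 0) x
      intro s
      have := hx0 s
      rw [hmv] at this
      simp [this]
    funext s
    exact le_antisymm (h1 s) (h2 s)
  have hsurj : Function.Surjective N.mulVecLin :=
    (LinearMap.injective_iff_surjective).mp hinj
  obtain ⟨W, hW⟩ := hsurj c
  exact ⟨W, fun s => by rw [← hmv W s]; exact congrFun hW s⟩

lemma entropy_nonpos {A : Type*} [Fintype A] (p : A → ℝ) (h0 : ∀ a, 0 ≤ p a)
    (h1 : ∑ a, p a = 1) : ∑ a, p a * Real.log (p a) ≤ 0 := by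
  apply Finset.sum_nonpos
  intro a _
  apply Real.mul_log_nonpos (h0 a)
  calc p a ≤ ∑ b, p b := Finset.single_le_sum (fun b _ => h0 b) (mem_univ a)
    _ = 1 := h1

lemma neg_entropy_le_log_card {A : Type*} [Fintype A] [Nonempty A] (p : A → ℝ)
    (h0 : ∀ a, 0 ≤ p a) (h1 : ∑ a, p a = 1) :
    -∑ a, p a * Real.log (p a) ≤ Real.log (Fintype.card A) := by
  have hn : (0 : ℝ) < (Fintype.card A : ℝ) := by
    exact_mod_cast Fintype.card_pos
  set n : ℝ := (Fintype.card A : ℝ) with hn_def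
  have jensen := ConcaveOn.le_map_sum (t := Finset.univ) (w := fun _ : A => n⁻¹)
    (p := p) Real.concaveOn_negMulLog
    (fun _ _ => by positivity)
    (by
      rw [Finset.sum_const, Finset.card_univ, nsmul_eq_mul]
      field_simp
      exact hn_def.symm)
    (fun a _ => h0 a)
  have hsum : ∑ a, n⁻¹ • p a = n⁻¹ := by
    rw [← Finset.smul_sum, h1, smul_eq_mul, mul_one]
  rw [hsum] at jensen
  have hval : Real.negMulLog n⁻¹ = n⁻¹ * Real.log n := by
    rw [Real.negMulLog, Real.log_inv]; ring
  rw [hval] at jensen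
  have : ∑ a, Real.negMulLog (p a) ≤ Real.log n := by
    have := mul_le_mul_of_nonneg_left jensen (le_of_lt hn)
    rw [Finset.mul_sum] at this
    calc ∑ a, Real.negMulLog (p a) = ∑ a, n * (n⁻¹ • Real.negMulLog (p a)) := by
          apply Finset.sum_congr rfl; intro a _
          rw [smul_eq_mul, ← mul_assoc, mul_inv_cancel₀ (ne_of_gt hn), one_mul]
      _ ≤ n * (n⁻¹ * Real.log n) := this
      _ = Real.log n := by field_simp
  calc -∑ a, p a * Real.log (p a) = ∑ a, Real.negMulLog (p a) := by
        rw [← Finset.sum_neg_distrib]; apply Finset.sum_congr rfl; intro a _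
        rw [Real.negMulLog]; ring
    _ ≤ Real.log n := this



/-- The regularized optimal value `V*_λ` satisfies
`0 ≤ (V*_λ)_s - V*_s ≤ (λ/(1-γ)) log|A|`, where `V*` is the unregularized optimal value. -/
theorem stmt17 {S A : Type*} [Fintype S] [Nonempty S] [Fintype A] [Nonempty A]
    (P : A → S → S → ℝ) (hP0 : ∀ a s t, 0 ≤ P a s t) (hP1 : ∀ a s, ∑ t, P a s t = 1)
    (r : S → A → ℝ) (γ : ℝ) (hγ0 : 0 < γ) (hγ1 : γ < 1)
    (lam : ℝ) (hlam : 0 < lam)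
    (πstar : S → A → ℝ)
    (hπstar0 : ∀ s a, 0 ≤ πstar s a) (hπstar1 : ∀ s, ∑ a, πstar s a = 1)
    (Vstar : S → ℝ)
    -- V* = V^{π*} : Bellman equation for (V*, π*)
    (hbellStar : ∀ s, Vstar s - γ * ∑ t, (∑ a, πstar s a * P a s t) * Vstar t
        = ∑ a, πstar s a * r s a)
    -- π* is optimal for the unregularized problem: V^{π*} ≥ V^π for every policy π
    (hoptStar : ∀ π : S → A → ℝ, (∀ s a, 0 ≤ π s a) → (∀ s, ∑ a, π s a = 1) →
      ∀ W : S → ℝ, (∀ s, W s - γ * ∑ t, (∑ a, π s a * P a s t) * W t = ∑ a, π s a * r s a) →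
      ∀ s, W s ≤ Vstar s)
    (πsl : S → A → ℝ)
    (hπsl0 : ∀ s a, 0 ≤ πsl s a) (hπsl1 : ∀ s, ∑ a, πsl s a = 1)
    (Vsl : S → ℝ)
    -- V*_λ = V^{π*_λ}_λ : regularized Bellman equation for (V*_λ, π*_λ)
    (hbellSl : ∀ s, Vsl s - γ * ∑ t, (∑ a, πsl s a * P a s t) * Vsl t
        = (∑ a, πsl s a * r s a) - lam * ∑ a, πsl s a * Real.log (πsl s a))
    -- π*_λ is optimal for the regularized problem: V^{π*_λ}_λ ≥ V^π_λ for every policy π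
    (hoptSl : ∀ π : S → A → ℝ, (∀ s a, 0 ≤ π s a) → (∀ s, ∑ a, π s a = 1) →
      ∀ W : S → ℝ, (∀ s, W s - γ * ∑ t, (∑ a, π s a * P a s t) * W t
        = (∑ a, π s a * r s a) - lam * ∑ a, π s a * Real.log (π s a)) →
      ∀ s, W s ≤ Vsl s) :
    ∀ s, 0 ≤ Vsl s - Vstar s ∧
      Vsl s - Vstar s ≤ (lam / (1 - γ)) * Real.log (Fintype.card A) := by
  classical
  have hγ0' : (0:ℝ) ≤ γ := le_of_lt hγ0
  -- row-stochasticity of the policy-induced transition matrices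
  have hrow : ∀ (π : S → A → ℝ), (∀ s a, 0 ≤ π s a) → (∀ s, ∑ a, π s a = 1) →
      (∀ s t, 0 ≤ ∑ a, π s a * P a s t) ∧ (∀ s, ∑ t, ∑ a, π s a * P a s t = 1) := by
    intro π h0 h1
    constructor
    · intro s t
      exact Finset.sum_nonneg fun a _ => mul_nonneg (h0 s a) (hP0 a s t)
    · intro s
      calc ∑ t, ∑ a, π s a * P a s t = ∑ a, ∑ t, π s a * P a s t := Finset.sum_comm
        _ = ∑ a, π s a * ∑ t, P a s t := by simp [Finset.mul_sum]
        _ = 1 := by simp [hP1, h1 s]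
  obtain ⟨hMst0, hMst1⟩ := hrow πstar hπstar0 hπstar1
  obtain ⟨hMsl0, hMsl1⟩ := hrow πsl hπsl0 hπsl1
  -- Lower bound: Vstar ≤ Vsl
  obtain ⟨W, hW⟩ := exists_sol (fun s t => ∑ a, πstar s a * P a s t) hMst0 hMst1 hγ0' hγ1
    (fun s => (∑ a, πstar s a * r s a) - lam * ∑ a, πstar s a * Real.log (πstar s a))
  have hVW : ∀ s, Vstar s ≤ W s := by
    apply comp_lemma (fun s t => ∑ a, πstar s a * P a s t) hMst0 hMst1 hγ0' hγ1
    intro s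
    have hH := entropy_nonpos (πstar s) (hπstar0 s) (hπstar1 s)
    have h1 := hbellStar s
    have h2 := hW s
    nlinarith
  have hWVsl : ∀ s, W s ≤ Vsl s := hoptSl πstar hπstar0 hπstar1 W hW
  -- Upper bound
  obtain ⟨U, hU⟩ := exists_sol (fun s t => ∑ a, πsl s a * P a s t) hMsl0 hMsl1 hγ0' hγ1
    (fun s => ∑ a, πsl s a * r s a)
  have hUV : ∀ s, U s ≤ Vstar s := hoptStar πsl hπsl0 hπsl1 U hU
  set c0 : ℝ := lam / (1 - γ) * Real.log (Fintype.card A) with hc0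
  have h1γ : (0:ℝ) < 1 - γ := by linarith
  have hc0eq : (1 - γ) * c0 = lam * Real.log (Fintype.card A) := by
    rw [hc0]; field_simp
  have hVslU : ∀ s, Vsl s ≤ U s + c0 := by
    apply comp_lemma (fun s t => ∑ a, πsl s a * P a s t) hMsl0 hMsl1 hγ0' hγ1
    intro s
    have hH := neg_entropy_le_log_card (πsl s) (hπsl0 s) (hπsl1 s)
    have h1 := hbellSl s
    have h2 := hU s
    have hsum : ∑ t, (∑ a, πsl s a * P a s t) * (U t + c0)
        = (∑ t, (∑ a, πsl s a * P a s t) * U t) + c0 := by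
      simp only [mul_add]
      rw [Finset.sum_add_distrib, ← Finset.sum_mul, hMsl1 s, one_mul]
    rw [hsum]
    nlinarith
  intro s
  constructor
  · have := hVW s; have := hWVsl s; linarith
  · have := hVslU s; have := hUV s
    have : Vsl s - Vstar s ≤ c0 := by linarith
    calc Vsl s - Vstar s ≤ c0 := this
      _ = lam / (1 - γ) * Real.log (Fintype.card A) := rfl
end
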